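/- arXiv:1902.07252 — 4 statements merged into one kernel-verified Lean document; each statement's English description precedes it below -/
import Mathlib

section
/- Let z = (z_1,…,z_d) ∈ T_L and i ∈ {1,…,d} be such that z_i is odd. Then |Ω^{dim}({o, z})| ≤ |Ω^{dim}({o, z_i e_i})|, i.e., the monomer–monomer correlation of the dimer model does not decrease when the second monomer is projected onto the i-th cartesian axis. -/
/-- Vertices of the torus `(ℤ/Lℤ)^d`. -/
abbrev TorusPt (d L : ℕ) := Fin d → ZMod L

/-- Nearest-neighbour adjacency on the torus: `x` and `y` differ by `±1 (mod L)`
in exactly one coordinate. -/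
def torusAdj {d L : ℕ} (x y : TorusPt d L) : Prop :=
  ∃ j : Fin d, y = Function.update x j (x j + 1) ∨ y = Function.update x j (x j - 1)

/-- The number `|Ω^{dim}(A)|` of dimer covers (perfect matchings) of the torus with the
vertices of `A` (and all edges incident to them) removed.  A dimer cover is encoded as
the involution `f` matching each remaining vertex to its partner. -/
noncomputable def dimerCount (d L : ℕ) (A : Finset (TorusPt d L)) : ℕ :=
  Nat.card {f : TorusPt d L → TorusPt d L //
    (∀ x ∈ A, f x = x) ∧
      ∀ x, x ∉ A → f x ∉ A ∧ f x ≠ x ∧ torusAdj x (f x) ∧ f (f x) = x}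

/-- The origin of the torus. -/
def torusOrigin (d L : ℕ) : TorusPt d L := fun _ => 0

/-- The point `n • e_i` on the `i`-th cartesian axis. -/
def axisPt (d L : ℕ) (i : Fin d) (n : ℕ) : TorusPt d L :=
  fun k => if k = i then (n : ZMod L) else 0

namespace DimerAux

variable {d L : ℕ}

/-- Reflection through the planes orthogonal to axis `i` at heights `v/2 + 1/2` and
`v/2 + L/2 + 1/2`. -/
def th (i : Fin d) (v : ℕ) (x : TorusPt d L) : TorusPt d L :=
  fun k => if k = i then (v : ZMod L) - x k else x k

/-- Membership in the "left" half `{x : v/2 + 1 ≤ x_i ≤ v/2 + L/2}`. -/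
def inL (i : Fin d) (v : ℕ) (x : TorusPt d L) : Prop :=
  v / 2 + 1 ≤ (x i).val ∧ (x i).val ≤ v / 2 + L / 2

/-- Boundary columns of the left half. -/
def isBd (i : Fin d) (v : ℕ) (x : TorusPt d L) : Prop :=
  (x i).val = v / 2 + 1 ∨ (x i).val = v / 2 + L / 2

instance (i : Fin d) (v : ℕ) : DecidablePred (inL (L := L) i v) := fun x => by
  unfold inL; infer_instance

instance (i : Fin d) (v : ℕ) : DecidablePred (isBd (L := L) i v) := fun x => by
  unfold isBd; infer_instance

lemma th_invol (i : Fin d) (v : ℕ) (x : TorusPt d L) : th i v (th i v x) = x := by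
  funext k
  by_cases hk : k = i <;> simp [th, hk]

lemma th_apply_i (i : Fin d) (v : ℕ) (x : TorusPt d L) : th i v x i = (v : ZMod L) - x i := by
  simp [th]

lemma th_apply_ne (i : Fin d) (v : ℕ) (x : TorusPt d L) {k : Fin d} (hk : k ≠ i) :
    th i v x k = x k := by simp [th, hk]

section Val

variable [NeZero L]

lemma val_vsub (v : ℕ) (hvL : v < L) (a : ZMod L) :
    ((v : ZMod L) - a).val = if a.val ≤ v then v - a.val else v + L - a.val := by
  have ha := ZMod.val_lt a
  have h1 : ((a.val : ℕ) : ZMod L) = a := ZMod.natCast_rightInverse a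
  by_cases h : a.val ≤ v
  · have h2 : (v : ZMod L) - a = ((v - a.val : ℕ) : ZMod L) := by
      rw [Nat.cast_sub h, h1]
    rw [if_pos h, h2, ZMod.val_cast_of_lt (by omega)]
  · have h2 : ((v + L - a.val : ℕ) : ZMod L) = (v : ZMod L) - a := by
      rw [Nat.cast_sub (by omega)]
      push_cast
      rw [ZMod.natCast_self, h1]
      ring
    rw [if_neg h, ← h2, ZMod.val_cast_of_lt (by omega)]

lemma val_addone (hL2 : 2 ≤ L) (a : ZMod L) :
    (a + 1).val = if a.val = L - 1 then 0 else a.val + 1 := by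
  have ha := ZMod.val_lt a
  have h1 : (1 : ZMod L).val = 1 := ZMod.val_one_eq_one_mod L ▸ (Nat.mod_eq_of_lt hL2)
  rw [ZMod.val_add, h1]
  split_ifs with h
  · rw [h]
    have h2 : L - 1 + 1 = L := by omega
    rw [h2, Nat.mod_self]
  · rw [Nat.mod_eq_of_lt (by omega)]

lemma val_subone (hL2 : 2 ≤ L) (a : ZMod L) :
    (a - 1).val = if a.val = 0 then L - 1 else a.val - 1 := by
  have ha := ZMod.val_lt a
  have h1 : ((a.val : ℕ) : ZMod L) = a := ZMod.natCast_rightInverse a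
  split_ifs with h
  · have ha0 : a = 0 := by rw [← h1, h]; simp
    have : ((L - 1 : ℕ) : ZMod L) = a - 1 := by
      rw [Nat.cast_sub (by omega), ZMod.natCast_self, ha0]; push_cast; ring
    rw [← this, ZMod.val_cast_of_lt (by omega)]
  · have : ((a.val - 1 : ℕ) : ZMod L) = a - 1 := by
      rw [Nat.cast_sub (by omega), h1]; push_cast; ring
    rw [← this, ZMod.val_cast_of_lt (by omega)]

end Val

section Cross

variable [NeZero L] (i : Fin d) (v : ℕ) (hv : v % 2 = 1) (hvL : v < L) (hL2 : L % 2 = 0)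

include hv hvL hL2

lemma inL_th (x : TorusPt d L) : inL i v (th i v x) ↔ ¬ inL i v x := by
  have hL : 1 ≤ L := Nat.one_le_iff_ne_zero.2 (NeZero.ne L)
  have ha := ZMod.val_lt (x i)
  unfold inL
  rw [th_apply_i, val_vsub v hvL]
  split_ifs with h <;> omega

lemma th_ne (x : TorusPt d L) : th i v x ≠ x := by
  intro h
  have h1 : (v : ZMod L) - x i = x i := by
    have := congrFun h i; rwa [th_apply_i] at this
  have h2 : x i + x i = (v : ZMod L) := by linear_combination -h1
  have h3 : ((x i).val + (x i).val) % L = v := by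
    have : (((x i).val + (x i).val : ℕ) : ZMod L) = (v : ZMod L) := by
      push_cast [ZMod.natCast_rightInverse (x i)]
      exact h2
    have hv' := ZMod.val_cast_of_lt hvL
    rw [← hv', ← this, ZMod.val_natCast]
  obtain ⟨c, hc⟩ : ∃ c : ℕ, (2 * c) % L = v ∧ c < L :=
    ⟨(x i).val, by rw [← h3]; ring_nf, ZMod.val_lt (x i)⟩
  obtain ⟨m, hm⟩ : ∃ m : ℕ, L = 2 * m := ⟨L / 2, by omega⟩
  rw [hm, Nat.mul_mod_mul_left] at hc
  omega

lemma cross_of_adj (x y : TorusPt d L) (hx : inL i v x) (hy : ¬ inL i v y)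
    (hadj : torusAdj x y) : y = th i v x ∧ isBd i v x := by
  have hL : 2 ≤ L := by omega
  obtain ⟨j, hj⟩ := hadj
  by_cases hji : j = i
  · subst hji
    have hxa := ZMod.val_lt (x j)
    have hx1 : ((x j).val : ZMod L) = x j := ZMod.natCast_rightInverse (x j)
    rcases hj with hj | hj
    · -- y = x + e_j
      have hyi : y j = x j + 1 := by rw [hj]; simp
      have hyk : ∀ k, k ≠ j → y k = x k := by
        intro k hk; rw [hj]; simp [Function.update, hk]
      have hyv : (y j).val = if (x j).val = L - 1 then 0 else (x j).val + 1 := by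
        rw [hyi, val_addone hL]
      have hc : (x j).val = v / 2 + L / 2 := by
        unfold inL at hx hy
        rcases hx with ⟨hx1', hx2'⟩
        split_ifs at hyv with hw <;> omega
      have hkey : x j + 1 = (v : ZMod L) - x j := by
        have key : x j + x j + 1 = (v : ZMod L) := by
          have h5 : ((x j).val + (x j).val + 1 : ℕ) = v + L := by omega
          calc x j + x j + 1 = (((x j).val + (x j).val + 1 : ℕ) : ZMod L) := by
                push_cast [hx1]; ring
            _ = (v : ZMod L) := by rw [h5]; push_cast [ZMod.natCast_self]; ring
        linear_combination key
      constructor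
      · funext k
        by_cases hk : k = j
        · subst hk; rw [hyi, th_apply_i, hkey]
        · rw [hyk k hk, th_apply_ne _ v x hk]
      · right; exact hc
    · -- y = x - e_j
      have hyi : y j = x j - 1 := by rw [hj]; simp
      have hyk : ∀ k, k ≠ j → y k = x k := by
        intro k hk; rw [hj]; simp [Function.update, hk]
      have hyv : (y j).val = if (x j).val = 0 then L - 1 else (x j).val - 1 := by
        rw [hyi, val_subone hL]
      have hc : (x j).val = v / 2 + 1 := by
        unfold inL at hx hy
        rcases hx with ⟨hx1', hx2'⟩
        split_ifs at hyv with hw <;> omega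
      have hkey : x j - 1 = (v : ZMod L) - x j := by
        have key : x j + x j = (v : ZMod L) + 1 := by
          have h5 : ((x j).val + (x j).val : ℕ) = v + 1 := by omega
          calc x j + x j = (((x j).val + (x j).val : ℕ) : ZMod L) := by
                push_cast [hx1]; ring
            _ = (v : ZMod L) + 1 := by rw [h5]; push_cast; ring
        linear_combination key
      constructor
      · funext k
        by_cases hk : k = j
        · subst hk; rw [hyi, th_apply_i, hkey]
        · rw [hyk k hk, th_apply_ne _ v x hk]
      · left; exact hc
  · exfalso
    have hyi : y i = x i := by
      rcases hj with hj | hj <;> (rw [hj]; simp [Function.update, Ne.symm hji])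
    exact hy (by unfold inL at hx ⊢; rw [hyi]; exact hx)

lemma adj_cross (x : TorusPt d L) (hb : isBd i v x) : torusAdj x (th i v x) := by
  have hL : 2 ≤ L := by omega
  have hxa := ZMod.val_lt (x i)
  have hx1 : ((x i).val : ZMod L) = x i := ZMod.natCast_rightInverse (x i)
  refine ⟨i, ?_⟩
  rcases hb with hc | hc
  · right
    funext k
    by_cases hk : k = i
    · subst hk
      rw [th_apply_i]
      simp only [Function.update_self]
      have key : x k + x k = (v : ZMod L) + 1 := by
        have h5 : ((x k).val + (x k).val : ℕ) = v + 1 := by omega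
        calc x k + x k = (((x k).val + (x k).val : ℕ) : ZMod L) := by
              push_cast [hx1]; ring
          _ = (v : ZMod L) + 1 := by rw [h5]; push_cast; ring
      linear_combination -key
    · rw [th_apply_ne _ v x hk, Function.update_of_ne hk]
  · left
    funext k
    by_cases hk : k = i
    · subst hk
      rw [th_apply_i]
      simp only [Function.update_self]
      have key : x k + x k + 1 = (v : ZMod L) := by
        have h5 : ((x k).val + (x k).val + 1 : ℕ) = v + L := by omega
        calc x k + x k + 1 = (((x k).val + (x k).val + 1 : ℕ) : ZMod L) := by
              push_cast [hx1]; ring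
          _ = (v : ZMod L) := by rw [h5]; push_cast [ZMod.natCast_self]; ring
      linear_combination -key
    · rw [th_apply_ne _ v x hk, Function.update_of_ne hk]

end Cross

section Struct

variable [NeZero L]

/-- The defining property of a dimer cover of the torus minus `A`. -/
def Conds (A : Finset (TorusPt d L)) (f : TorusPt d L → TorusPt d L) : Prop :=
  (∀ x ∈ A, f x = x) ∧
    ∀ x, x ∉ A → f x ∉ A ∧ f x ≠ x ∧ torusAdj x (f x) ∧ f (f x) = x

def SType (A : Finset (TorusPt d L)) : Type _ := {f : TorusPt d L → TorusPt d L // Conds A f}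

instance (A : Finset (TorusPt d L)) : Finite (SType A) := by
  unfold SType; infer_instance

variable (i : Fin d) (v : ℕ)

/-- The domain of a left-half configuration: left-half vertices outside `K`. -/
def Dom (K : Finset (TorusPt d L)) (x : TorusPt d L) : Prop := inL i v x ∧ x ∉ K

instance (K : Finset (TorusPt d L)) : DecidablePred (Dom i v K) := fun x => by
  unfold Dom; infer_instance

/-- The defining property of a dimer cover of the left half minus `K`. -/
def HalfConds (K : Finset (TorusPt d L)) (g : TorusPt d L → TorusPt d L) : Prop :=
  (∀ x, ¬ Dom i v K x → g x = x) ∧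
    ∀ x, Dom i v K x → Dom i v K (g x) ∧ g x ≠ x ∧ torusAdj x (g x) ∧ g (g x) = x

def Half (K : Finset (TorusPt d L)) : Type _ :=
  {g : TorusPt d L → TorusPt d L // HalfConds i v K g}

instance (K : Finset (TorusPt d L)) : Finite (Half i v K) := by
  unfold Half; infer_instance

noncomputable def halfCount (K : Finset (TorusPt d L)) : ℕ := Nat.card (Half i v K)

/-- The set of crossing positions of a matching: left-half vertices matched to their
reflections. -/
def sigOf (A : Finset (TorusPt d L)) (f : TorusPt d L → TorusPt d L) :
    Finset (TorusPt d L) :=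
  Finset.univ.filter (fun x => x ∉ A ∧ inL i v x ∧ f x = th i v x)

def AL (A : Finset (TorusPt d L)) : Finset (TorusPt d L) :=
  A.filter (inL i v)

def AR (A : Finset (TorusPt d L)) : Finset (TorusPt d L) :=
  (A.filter (fun x => ¬ inL i v x)).image (th i v)

/-- Admissible crossing sets. -/
def Fok (A : Finset (TorusPt d L)) (σ : Finset (TorusPt d L)) : Prop :=
  ∀ x ∈ σ, inL i v x ∧ isBd i v x ∧ x ∉ A ∧ th i v x ∉ A

instance (A σ : Finset (TorusPt d L)) : Decidable (Fok i v A σ) := by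
  unfold Fok; infer_instance

def FF (A : Finset (TorusPt d L)) : Finset (Finset (TorusPt d L)) :=
  Finset.univ.filter (Fok i v A)

lemma mem_sigOf {A : Finset (TorusPt d L)} {f : TorusPt d L → TorusPt d L}
    {x : TorusPt d L} :
    x ∈ sigOf i v A f ↔ x ∉ A ∧ inL i v x ∧ f x = th i v x := by
  simp [sigOf]

lemma mem_AL {A : Finset (TorusPt d L)} {x : TorusPt d L} :
    x ∈ AL i v A ↔ x ∈ A ∧ inL i v x := by simp [AL]

lemma mem_AR {A : Finset (TorusPt d L)} {x : TorusPt d L} :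
    x ∈ AR i v A ↔ th i v x ∈ A ∧ ¬ inL i v (th i v x) := by
  simp only [AR, Finset.mem_image, Finset.mem_filter]
  constructor
  · rintro ⟨w, ⟨hw1, hw2⟩, rfl⟩
    rw [th_invol]
    exact ⟨hw1, hw2⟩
  · rintro ⟨h1, h2⟩
    exact ⟨th i v x, ⟨h1, h2⟩, th_invol i v x⟩

lemma mem_FF {A σ : Finset (TorusPt d L)} : σ ∈ FF i v A ↔ Fok i v A σ := by simp [FF]

end Struct

section Match

variable [NeZero L] (i : Fin d) (v : ℕ) (hv : v % 2 = 1) (hvL : v < L) (hL2 : L % 2 = 0)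

include hv hvL hL2

lemma not_inL_th {x : TorusPt d L} (hx : inL i v x) : ¬ inL i v (th i v x) :=
  fun h => (inL_th i v hv hvL hL2 x).1 h hx

lemma inL_th' {x : TorusPt d L} (hx : ¬ inL i v x) : inL i v (th i v x) :=
  (inL_th i v hv hvL hL2 x).2 hx

lemma match_cross {A : Finset (TorusPt d L)} {f : TorusPt d L → TorusPt d L}
    (hf : Conds A f) {x : TorusPt d L} (hx : x ∉ A) (h1 : inL i v x)
    (h2 : ¬ inL i v (f x)) : f x = th i v x :=
  (cross_of_adj i v hv hvL hL2 x (f x) h1 h2 (hf.2 x hx).2.2.1).1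

lemma match_cross' {A : Finset (TorusPt d L)} {f : TorusPt d L → TorusPt d L}
    (hf : Conds A f) {x : TorusPt d L} (hx : x ∉ A) (h1 : ¬ inL i v x)
    (h2 : inL i v (f x)) : f x = th i v x := by
  obtain ⟨hfA, hfne, hadj, hff⟩ := hf.2 x hx
  have h3 := (cross_of_adj i v hv hvL hL2 (f x) (f (f x)) h2 (by rwa [hff])
    (hf.2 (f x) hfA).2.2.1).1
  rw [hff] at h3
  conv_rhs => rw [h3]
  rw [th_invol]

end Match


section Adj

variable (i : Fin d) (v : ℕ)

lemma adj_symm {a b : TorusPt d L} (h : torusAdj a b) : torusAdj b a := by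
  obtain ⟨j, hj | hj⟩ := h
  · refine ⟨j, Or.inr ?_⟩
    funext k
    by_cases hk : k = j
    · subst hk
      rw [hj]
      simp
    · rw [hj]
      simp [Function.update, hk]
  · refine ⟨j, Or.inl ?_⟩
    funext k
    by_cases hk : k = j
    · subst hk
      rw [hj]
      simp
    · rw [hj]
      simp [Function.update, hk]

lemma th_adj {a b : TorusPt d L} (h : torusAdj a b) :
    torusAdj (th i v a) (th i v b) := by
  obtain ⟨j, hj | hj⟩ := h
  · by_cases hji : j = i
    · subst hji
      refine ⟨j, Or.inr ?_⟩
      funext k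
      by_cases hk : k = j
      · subst hk
        rw [th_apply_i]
        simp only [Function.update_self, th_apply_i]
        rw [hj]
        simp only [Function.update_self]
        ring
      · rw [th_apply_ne _ v b hk, Function.update_of_ne hk, th_apply_ne _ v a hk, hj,
          Function.update_of_ne hk]
    · refine ⟨j, Or.inl ?_⟩
      funext k
      by_cases hk : k = j
      · subst hk
        rw [th_apply_ne _ v b hji, Function.update_self, th_apply_ne _ v a hji, hj,
          Function.update_self]
      · by_cases hki : k = i
        · subst hki
          rw [th_apply_i, Function.update_of_ne hk, th_apply_i, hj, Function.update_of_ne hk]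
        · rw [th_apply_ne _ v b hki, Function.update_of_ne hk, th_apply_ne _ v a hki, hj,
            Function.update_of_ne hk]
  · by_cases hji : j = i
    · subst hji
      refine ⟨j, Or.inl ?_⟩
      funext k
      by_cases hk : k = j
      · subst hk
        rw [th_apply_i]
        simp only [Function.update_self, th_apply_i]
        rw [hj]
        simp only [Function.update_self]
        ring
      · rw [th_apply_ne _ v b hk, Function.update_of_ne hk, th_apply_ne _ v a hk, hj,
          Function.update_of_ne hk]
    · refine ⟨j, Or.inr ?_⟩
      funext k
      by_cases hk : k = j
      · subst hk
        rw [th_apply_ne _ v b hji, Function.update_self, th_apply_ne _ v a hji, hj,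
          Function.update_self]
      · by_cases hki : k = i
        · subst hki
          rw [th_apply_i, Function.update_of_ne hk, th_apply_i, hj, Function.update_of_ne hk]
        · rw [th_apply_ne _ v b hki, Function.update_of_ne hk, th_apply_ne _ v a hki, hj,
            Function.update_of_ne hk]

end Adj

section Split

variable [NeZero L] (i : Fin d) (v : ℕ)

def lhalf (K : Finset (TorusPt d L)) (f : TorusPt d L → TorusPt d L) :
    TorusPt d L → TorusPt d L :=
  fun x => if Dom i v K x then f x else x

def rhalf (K : Finset (TorusPt d L)) (f : TorusPt d L → TorusPt d L) :
    TorusPt d L → TorusPt d L :=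
  fun x => if Dom i v K x then th i v (f (th i v x)) else x

def recon (σ : Finset (TorusPt d L)) (g h : TorusPt d L → TorusPt d L) :
    TorusPt d L → TorusPt d L :=
  fun x => if x ∈ σ ∨ th i v x ∈ σ then th i v x
    else if inL i v x then g x else th i v (h (th i v x))

variable (hv : v % 2 = 1) (hvL : v < L) (hL2 : L % 2 = 0)
variable {A : Finset (TorusPt d L)} {f : TorusPt d L → TorusPt d L}

include hv hvL hL2

lemma sigOf_fok (hf : Conds A f) : Fok i v A (sigOf i v A f) := by
  intro x hx
  obtain ⟨hxA, hxL, hxc⟩ := mem_sigOf i v |>.1 hx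
  obtain ⟨hfA, hfne, hadj, hff⟩ := hf.2 x hxA
  rw [hxc] at hadj hfA
  exact ⟨hxL, (cross_of_adj i v hv hvL hL2 x (th i v x) hxL
    (not_inL_th i v hv hvL hL2 hxL) hadj).2, hxA, hfA⟩

lemma lhalf_mem (hf : Conds A f) :
    HalfConds i v (AL i v A ∪ sigOf i v A f) (lhalf i v (AL i v A ∪ sigOf i v A f) f) := by
  set σf := sigOf i v A f with hσf
  set K := AL i v A ∪ σf with hK
  constructor
  · intro x hx
    simp only [lhalf, if_neg hx]
  · intro x hD
    have hxL := hD.1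
    have hxK := hD.2
    rw [hK, Finset.notMem_union] at hxK
    have hxA : x ∉ A := fun h => hxK.1 ((mem_AL i v).2 ⟨h, hxL⟩)
    have hxσ : x ∉ σf := hxK.2
    obtain ⟨hfA, hfne, hadj, hff⟩ := hf.2 x hxA
    have hfL : inL i v (f x) := by
      by_contra h
      exact hxσ ((mem_sigOf i v).2 ⟨hxA, hxL, match_cross i v hv hvL hL2 hf hxA hxL h⟩)
    have hfσ : f x ∉ σf := by
      intro h
      obtain ⟨h1, h2, h3⟩ := (mem_sigOf i v).1 h
      rw [hff] at h3
      have h4 := congrArg (th i v) h3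
      rw [th_invol] at h4
      rw [← h4] at hfL
      exact not_inL_th i v hv hvL hL2 hxL hfL
    have hfK : f x ∉ K := by
      rw [hK, Finset.notMem_union]
      exact ⟨fun h => hfA ((mem_AL i v).1 h).1, hfσ⟩
    have hval : lhalf i v K f x = f x := by
      simp only [lhalf]
      rw [if_pos hD]
    refine ⟨?_, ?_, ?_, ?_⟩
    · rw [hval]; exact ⟨hfL, hfK⟩
    · rw [hval]; exact hfne
    · rw [hval]; exact hadj
    · rw [hval]
      simp only [lhalf]
      have hDf : Dom i v K (f x) := ⟨hfL, hfK⟩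
      rw [if_pos hDf]
      exact hff

lemma rhalf_mem (hf : Conds A f) :
    HalfConds i v (AR i v A ∪ sigOf i v A f) (rhalf i v (AR i v A ∪ sigOf i v A f) f) := by
  set σf := sigOf i v A f with hσf
  set K := AR i v A ∪ σf with hK
  constructor
  · intro x hx
    simp only [rhalf, if_neg hx]
  · intro x hD
    have hxL := hD.1
    have hxK := hD.2
    rw [hK, Finset.notMem_union] at hxK
    have hyR : ¬ inL i v (th i v x) := not_inL_th i v hv hvL hL2 hxL
    have hyA : th i v x ∉ A := fun h => hxK.1 ((mem_AR i v).2 ⟨h, hyR⟩)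
    have hxσ : x ∉ σf := hxK.2
    obtain ⟨hfA, hfne, hadj, hff⟩ := hf.2 (th i v x) hyA
    have hfR : ¬ inL i v (f (th i v x)) := by
      intro h
      have h4 : f (th i v x) = th i v (th i v x) :=
        match_cross' i v hv hvL hL2 hf hyA hyR h
      rw [th_invol] at h4
      rw [h4] at hff
      by_cases hxA : x ∈ A
      · rw [hf.1 x hxA] at hff
        exact th_ne i v hv hvL hL2 x hff.symm
      · exact hxσ ((mem_sigOf i v).2 ⟨hxA, hxL, hff⟩)
    have hwL : inL i v (th i v (f (th i v x))) := inL_th' i v hv hvL hL2 hfR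
    have hwK : th i v (f (th i v x)) ∉ K := by
      rw [hK, Finset.notMem_union]
      constructor
      · intro h
        obtain ⟨h1, _⟩ := (mem_AR i v).1 h
        rw [th_invol] at h1
        exact hfA h1
      · intro h
        obtain ⟨h1, h2, h3⟩ := (mem_sigOf i v).1 h
        rw [th_invol] at h3
        have h5 := (hf.2 _ h1).2.2.2
        have h6 : th i v (f (th i v x)) = th i v x := by
          rw [← h5, h3]
          exact hff
        exact hyR (h6 ▸ h2)
    have hval : rhalf i v K f x = th i v (f (th i v x)) := by
      simp only [rhalf]
      rw [if_pos hD]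
    refine ⟨?_, ?_, ?_, ?_⟩
    · rw [hval]; exact ⟨hwL, hwK⟩
    · rw [hval]
      intro hcon
      apply hfne
      have h7 := congrArg (th i v) hcon
      rwa [th_invol] at h7
    · rw [hval]
      have h8 := th_adj i v hadj
      rwa [th_invol] at h8
    · rw [hval]
      simp only [rhalf]
      have hDw : Dom i v K (th i v (f (th i v x))) := ⟨hwL, hwK⟩
      rw [if_pos hDw]
      rw [th_invol, hff, th_invol]

lemma lhalf_mem' {σ : Finset (TorusPt d L)} (hf : Conds A f) (hfib : sigOf i v A f = σ) :
    HalfConds i v (AL i v A ∪ σ) (lhalf i v (AL i v A ∪ σ) f) := by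
  subst hfib
  exact lhalf_mem i v hv hvL hL2 hf

lemma rhalf_mem' {σ : Finset (TorusPt d L)} (hf : Conds A f) (hfib : sigOf i v A f = σ) :
    HalfConds i v (AR i v A ∪ σ) (rhalf i v (AR i v A ∪ σ) f) := by
  subst hfib
  exact rhalf_mem i v hv hvL hL2 hf

lemma recon_mem {σ : Finset (TorusPt d L)} {g h : TorusPt d L → TorusPt d L}
    (hσ : Fok i v A σ) (hg : HalfConds i v (AL i v A ∪ σ) g)
    (hh : HalfConds i v (AR i v A ∪ σ) h) : Conds A (recon i v σ g h) := by
  constructor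
  · intro x hxA
    have hx1 : x ∉ σ := fun hc => (hσ x hc).2.2.1 hxA
    have hx2 : th i v x ∉ σ := fun hc => (hσ _ hc).2.2.2 (by rwa [th_invol])
    simp only [recon]
    rw [if_neg (not_or.mpr ⟨hx1, hx2⟩)]
    by_cases hxL : inL i v x
    · rw [if_pos hxL]
      exact hg.1 x (fun hD => hD.2 (Finset.mem_union_left _ ((mem_AL i v).2 ⟨hxA, hxL⟩)))
    · rw [if_neg hxL]
      have hfix : h (th i v x) = th i v x := hh.1 _ (fun hD => hD.2
        (Finset.mem_union_left _ ((mem_AR i v).2 ⟨by rwa [th_invol], by rwa [th_invol]⟩)))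
      rw [hfix, th_invol]
  · intro x hxA
    by_cases hx1 : x ∈ σ
    · obtain ⟨hL1, hB1, hA1, hA2⟩ := hσ x hx1
      have hval : recon i v σ g h x = th i v x := by
        simp only [recon]; rw [if_pos (Or.inl hx1)]
      have hval2 : recon i v σ g h (th i v x) = x := by
        simp only [recon]
        rw [if_pos (Or.inr (by rwa [th_invol])), th_invol]
      rw [hval]
      exact ⟨hA2, th_ne i v hv hvL hL2 x, adj_cross i v hv hvL hL2 x hB1, hval2⟩
    · by_cases hx2 : th i v x ∈ σ
      · obtain ⟨hL1, hB1, hA1, hA2⟩ := hσ _ hx2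
        have hval : recon i v σ g h x = th i v x := by
          simp only [recon]; rw [if_pos (Or.inr hx2)]
        have hval2 : recon i v σ g h (th i v x) = x := by
          simp only [recon]
          rw [if_pos (Or.inl hx2), th_invol]
        rw [hval]
        refine ⟨hA1, th_ne i v hv hvL hL2 x, ?_, hval2⟩
        have h9 := adj_cross i v hv hvL hL2 (th i v x) hB1
        rw [th_invol] at h9
        exact adj_symm h9
      · by_cases hxL : inL i v x
        · have hDg : Dom i v (AL i v A ∪ σ) x := ⟨hxL, by
            rw [Finset.notMem_union]
            exact ⟨fun hc => hxA ((mem_AL i v).1 hc).1, hx1⟩⟩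
          obtain ⟨hgD, hgne, hgadj, hgg⟩ := hg.2 x hDg
          have hval : recon i v σ g h x = g x := by
            simp only [recon]
            rw [if_neg (not_or.mpr ⟨hx1, hx2⟩), if_pos hxL]
          have hgσ : g x ∉ σ := fun hc => hgD.2 (Finset.mem_union_right _ hc)
          have hgA : g x ∉ A := fun hc => hgD.2
            (Finset.mem_union_left _ ((mem_AL i v).2 ⟨hc, hgD.1⟩))
          have hval2 : recon i v σ g h (g x) = g (g x) := by
            simp only [recon]
            rw [if_neg (not_or.mpr ⟨hgσ, fun hc =>
              not_inL_th i v hv hvL hL2 hgD.1 (hσ _ hc).1⟩), if_pos hgD.1]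
          rw [hval]
          exact ⟨hgA, hgne, hgadj, by rw [hval2, hgg]⟩
        · have hDy : Dom i v (AR i v A ∪ σ) (th i v x) :=
            ⟨inL_th' i v hv hvL hL2 hxL, by
              rw [Finset.notMem_union]
              refine ⟨fun hc => ?_, hx2⟩
              obtain ⟨hc1, -⟩ := (mem_AR i v).1 hc
              rw [th_invol] at hc1
              exact hxA hc1⟩
          obtain ⟨hhD, hhne, hhadj, hhh⟩ := hh.2 _ hDy
          have hval : recon i v σ g h x = th i v (h (th i v x)) := by
            simp only [recon]
            rw [if_neg (not_or.mpr ⟨hx1, hx2⟩), if_neg hxL]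
          have hwA : th i v (h (th i v x)) ∉ A := by
            intro hc
            exact hhD.2 (Finset.mem_union_left _ ((mem_AR i v).2
              ⟨hc, not_inL_th i v hv hvL hL2 hhD.1⟩))
          have hwσ : th i v (h (th i v x)) ∉ σ := fun hc =>
            not_inL_th i v hv hvL hL2 hhD.1 (hσ _ hc).1
          have hwσ2 : th i v (th i v (h (th i v x))) ∉ σ := by
            rw [th_invol]
            exact fun hc => hhD.2 (Finset.mem_union_right _ hc)
          have hval2 : recon i v σ g h (th i v (h (th i v x))) = x := by
            simp only [recon]
            rw [if_neg (not_or.mpr ⟨hwσ, hwσ2⟩),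
              if_neg (not_inL_th i v hv hvL hL2 hhD.1), th_invol, hhh, th_invol]
          rw [hval]
          refine ⟨hwA, ?_, ?_, hval2⟩
          · intro hc
            have h7 := congrArg (th i v) hc
            rw [th_invol] at h7
            exact hhne h7
          · have h8 := th_adj i v hhadj
            rwa [th_invol] at h8

lemma recon_sig {σ : Finset (TorusPt d L)} {g h : TorusPt d L → TorusPt d L}
    (hσ : Fok i v A σ) (hg : HalfConds i v (AL i v A ∪ σ) g) :
    sigOf i v A (recon i v σ g h) = σ := by
  ext x
  rw [mem_sigOf]
  constructor
  · rintro ⟨hxA, hxL, hxc⟩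
    by_cases hx1 : x ∈ σ
    · exact hx1
    by_cases hx2 : th i v x ∈ σ
    · exact absurd (hσ _ hx2).1 (not_inL_th i v hv hvL hL2 hxL)
    · exfalso
      have hval : recon i v σ g h x = g x := by
        simp only [recon]
        rw [if_neg (not_or.mpr ⟨hx1, hx2⟩), if_pos hxL]
      rw [hval] at hxc
      have hDg : Dom i v (AL i v A ∪ σ) x := ⟨hxL, by
        rw [Finset.notMem_union]
        exact ⟨fun hc => hxA ((mem_AL i v).1 hc).1, hx1⟩⟩
      have h6 := (hg.2 x hDg).1.1
      rw [hxc] at h6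
      exact not_inL_th i v hv hvL hL2 hxL h6
  · intro hx
    obtain ⟨hL1, hB1, hA1, hA2⟩ := hσ x hx
    exact ⟨hA1, hL1, by simp only [recon]; rw [if_pos (Or.inl hx)]⟩

lemma recon_lhalf {σ : Finset (TorusPt d L)} {g h : TorusPt d L → TorusPt d L}
    (hσ : Fok i v A σ) (hg : HalfConds i v (AL i v A ∪ σ) g) :
    lhalf i v (AL i v A ∪ σ) (recon i v σ g h) = g := by
  funext x
  by_cases hD : Dom i v (AL i v A ∪ σ) x
  · have hx1 : x ∉ σ := fun hc => hD.2 (Finset.mem_union_right _ hc)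
    have hx2 : th i v x ∉ σ := fun hc => not_inL_th i v hv hvL hL2 hD.1 (hσ _ hc).1
    simp only [lhalf, recon]
    rw [if_pos hD, if_neg (not_or.mpr ⟨hx1, hx2⟩), if_pos hD.1]
  · simp only [lhalf]
    rw [if_neg hD]
    exact (hg.1 x hD).symm

lemma recon_rhalf {σ : Finset (TorusPt d L)} {g h : TorusPt d L → TorusPt d L}
    (hσ : Fok i v A σ) (hh : HalfConds i v (AR i v A ∪ σ) h) :
    rhalf i v (AR i v A ∪ σ) (recon i v σ g h) = h := by
  funext x
  by_cases hD : Dom i v (AR i v A ∪ σ) x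
  · have hx3 : th i v x ∉ σ := fun hc => not_inL_th i v hv hvL hL2 hD.1 (hσ _ hc).1
    have hx4 : x ∉ σ := fun hc => hD.2 (Finset.mem_union_right _ hc)
    have hc1 : ¬ (th i v x ∈ σ ∨ th i v (th i v x) ∈ σ) := by
      rw [th_invol]
      exact not_or.mpr ⟨hx3, hx4⟩
    simp only [rhalf, recon]
    rw [if_pos hD, if_neg hc1, if_neg (not_inL_th i v hv hvL hL2 hD.1)]
    simp only [th_invol]
  · simp only [rhalf]
    rw [if_neg hD]
    exact (hh.1 x hD).symm

lemma recon_eq (hf : Conds A f) :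
    recon i v (sigOf i v A f) (lhalf i v (AL i v A ∪ sigOf i v A f) f)
      (rhalf i v (AR i v A ∪ sigOf i v A f) f) = f := by
  funext x
  by_cases hxA : x ∈ A
  · rw [(recon_mem i v hv hvL hL2 (sigOf_fok i v hv hvL hL2 hf)
      (lhalf_mem i v hv hvL hL2 hf) (rhalf_mem i v hv hvL hL2 hf)).1 x hxA, hf.1 x hxA]
  · by_cases hx1 : x ∈ sigOf i v A f
    · simp only [recon]
      rw [if_pos (Or.inl hx1)]
      exact ((mem_sigOf i v).1 hx1).2.2.symm
    · by_cases hx2 : th i v x ∈ sigOf i v A f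
      · simp only [recon]
        rw [if_pos (Or.inr hx2)]
        obtain ⟨hA1, hL1, hc1⟩ := (mem_sigOf i v).1 hx2
        rw [th_invol] at hc1
        have h5 := (hf.2 _ hA1).2.2.2
        rw [hc1] at h5
        exact h5.symm
      · by_cases hxL : inL i v x
        · simp only [recon]
          rw [if_neg (not_or.mpr ⟨hx1, hx2⟩), if_pos hxL]
          have hDx : Dom i v (AL i v A ∪ sigOf i v A f) x := ⟨hxL, by
            rw [Finset.notMem_union]
            exact ⟨fun hc => hxA ((mem_AL i v).1 hc).1, hx1⟩⟩
          simp only [lhalf]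
          rw [if_pos hDx]
        · simp only [recon]
          rw [if_neg (not_or.mpr ⟨hx1, hx2⟩), if_neg hxL]
          have hDy : Dom i v (AR i v A ∪ sigOf i v A f) (th i v x) :=
            ⟨inL_th' i v hv hvL hL2 hxL, by
              rw [Finset.notMem_union]
              refine ⟨fun hc => ?_, hx2⟩
              obtain ⟨hc1, -⟩ := (mem_AR i v).1 hc
              rw [th_invol] at hc1
              exact hxA hc1⟩
          simp only [rhalf]
          rw [if_pos hDy, th_invol, th_invol]

noncomputable def fiberEquiv (A : Finset (TorusPt d L)) (σ : Finset (TorusPt d L))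
    (hσ : Fok i v A σ) :
    {p : SType A // sigOf i v A p.1 = σ} ≃
      (Half i v (AL i v A ∪ σ) × Half i v (AR i v A ∪ σ)) where
  toFun p :=
    (⟨lhalf i v (AL i v A ∪ σ) p.1.1, lhalf_mem' i v hv hvL hL2 p.1.2 p.2⟩,
     ⟨rhalf i v (AR i v A ∪ σ) p.1.1, rhalf_mem' i v hv hvL hL2 p.1.2 p.2⟩)
  invFun q :=
    ⟨⟨recon i v σ q.1.1 q.2.1, recon_mem i v hv hvL hL2 hσ q.1.2 q.2.2⟩,
      recon_sig i v hv hvL hL2 hσ q.1.2⟩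
  left_inv p := by
    obtain ⟨⟨f, hf⟩, hfib⟩ := p
    refine Subtype.ext (Subtype.ext ?_)
    simp only
    rw [← hfib]
    exact recon_eq i v hv hvL hL2 hf
  right_inv q := by
    obtain ⟨⟨g, hg⟩, ⟨h, hh⟩⟩ := q
    have e1 : lhalf i v (AL i v A ∪ σ) (recon i v σ g h) = g :=
      recon_lhalf i v hv hvL hL2 hσ hg
    have e2 : rhalf i v (AR i v A ∪ σ) (recon i v σ g h) = h :=
      recon_rhalf i v hv hvL hL2 hσ hh
    exact Prod.ext (Subtype.ext e1) (Subtype.ext e2)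

theorem master (A : Finset (TorusPt d L)) :
    Nat.card (SType A) =
      ∑ σ ∈ FF i v A, halfCount i v (AL i v A ∪ σ) * halfCount i v (AR i v A ∪ σ) := by
  classical
  have e0 : Nat.card (SType A) =
      ∑ σ : Finset (TorusPt d L), Nat.card {p : SType A // sigOf i v A p.1 = σ} := by
    rw [← Nat.card_congr (Equiv.sigmaFiberEquiv (fun p : SType A => sigOf i v A p.1))]
    letI : ∀ σ : Finset (TorusPt d L), Fintype {p : SType A // sigOf i v A p.1 = σ} :=
      fun σ => Fintype.ofFinite _
    simp [Nat.card_eq_fintype_card, Fintype.card_sigma]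
  have e1 : ∀ σ, Fok i v A σ → Nat.card {p : SType A // sigOf i v A p.1 = σ} =
      halfCount i v (AL i v A ∪ σ) * halfCount i v (AR i v A ∪ σ) := by
    intro σ hσ
    rw [halfCount, halfCount, ← Nat.card_prod]
    exact Nat.card_congr (fiberEquiv i v hv hvL hL2 A σ hσ)
  have e2 : ∀ σ, ¬ Fok i v A σ → Nat.card {p : SType A // sigOf i v A p.1 = σ} = 0 := by
    intro σ hσ
    have : IsEmpty {p : SType A // sigOf i v A p.1 = σ} :=
      ⟨fun p => hσ (p.2 ▸ sigOf_fok i v hv hvL hL2 p.1.2)⟩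
    exact Nat.card_of_isEmpty
  rw [e0]
  calc ∑ σ : Finset (TorusPt d L), Nat.card {p : SType A // sigOf i v A p.1 = σ}
      = ∑ σ : Finset (TorusPt d L),
          (if Fok i v A σ then
            halfCount i v (AL i v A ∪ σ) * halfCount i v (AR i v A ∪ σ) else 0) := by
        refine Finset.sum_congr rfl (fun σ _ => ?_)
        by_cases hσ : Fok i v A σ
        · rw [if_pos hσ, e1 σ hσ]
        · rw [if_neg hσ, e2 σ hσ]
    _ = ∑ σ ∈ FF i v A, halfCount i v (AL i v A ∪ σ) * halfCount i v (AR i v A ∪ σ) :=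
        (Finset.sum_filter _ _).symm

end Split



section Invariance

variable [NeZero L]

lemma adj_add (c : TorusPt d L) {x y : TorusPt d L} (hadj : torusAdj x y) :
    torusAdj (x + c) (y + c) := by
  obtain ⟨j, hj | hj⟩ := hadj
  · refine ⟨j, Or.inl ?_⟩
    funext k
    by_cases hk : k = j
    · subst hk
      rw [hj]
      simp only [Pi.add_apply, Function.update_self]
      ring
    · rw [hj]
      simp [Function.update, hk]
  · refine ⟨j, Or.inr ?_⟩
    funext k
    by_cases hk : k = j
    · subst hk
      rw [hj]
      simp only [Pi.add_apply, Function.update_self]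
      ring
    · rw [hj]
      simp [Function.update, hk]

/-- Translation by `c` as an equivalence. -/
def transEquiv (c : TorusPt d L) : TorusPt d L ≃ TorusPt d L where
  toFun x := x + c
  invFun x := x - c
  left_inv x := by simp
  right_inv x := by simp

lemma conds_map (e : TorusPt d L ≃ TorusPt d L)
    (he : ∀ x y, torusAdj x y → torusAdj (e x) (e y))
    (A : Finset (TorusPt d L)) (f : TorusPt d L → TorusPt d L) (hf : Conds A f) :
    Conds (A.image e) (e ∘ f ∘ e.symm) := by
  classical
  have hmem : ∀ x : TorusPt d L, x ∈ A.image e ↔ e.symm x ∈ A := by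
    intro x
    rw [Finset.mem_image]
    constructor
    · rintro ⟨a, ha, rfl⟩
      rwa [Equiv.symm_apply_apply]
    · intro hx
      exact ⟨_, hx, e.apply_symm_apply x⟩
  constructor
  · intro x hx
    simp only [Function.comp_apply]
    rw [hf.1 _ ((hmem x).1 hx), Equiv.apply_symm_apply]
  · intro x hx
    rw [hmem] at hx
    obtain ⟨h1, h2, h3, h4⟩ := hf.2 _ hx
    refine ⟨?_, ?_, ?_, ?_⟩
    · simp only [Function.comp_apply]
      rw [hmem, Equiv.symm_apply_apply]
      exact h1
    · simp only [Function.comp_apply]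
      intro hc
      apply h2
      have h5 := congrArg e.symm hc
      rwa [Equiv.symm_apply_apply] at h5
    · have h5 := he _ _ h3
      rwa [Equiv.apply_symm_apply] at h5
    · simp only [Function.comp_apply]
      rw [Equiv.symm_apply_apply, h4, Equiv.apply_symm_apply]

lemma card_SType_le (e : TorusPt d L ≃ TorusPt d L)
    (he : ∀ x y, torusAdj x y → torusAdj (e x) (e y)) (A : Finset (TorusPt d L)) :
    Nat.card (SType A) ≤ Nat.card (SType (A.image e)) := by
  classical
  apply Nat.card_le_card_of_injective
    (fun p : SType A => (⟨e ∘ p.1 ∘ e.symm, conds_map e he A p.1 p.2⟩ : SType (A.image e)))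
  intro p q hpq
  apply Subtype.ext
  have h0 := congrArg Subtype.val hpq
  funext x
  have h2 := congrFun h0 (e x)
  simp only [Function.comp_apply, Equiv.symm_apply_apply] at h2
  exact e.injective h2

lemma card_SType_image (e : TorusPt d L ≃ TorusPt d L)
    (he : ∀ x y, torusAdj x y → torusAdj (e x) (e y))
    (he' : ∀ x y, torusAdj x y → torusAdj (e.symm x) (e.symm y)) (A : Finset (TorusPt d L)) :
    Nat.card (SType A) = Nat.card (SType (A.image e)) := by
  classical
  refine le_antisymm (card_SType_le e he A) ?_
  have himg : (A.image e).image e.symm = A := by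
    rw [Finset.image_image]
    simp
  have hle := card_SType_le e.symm he' (A.image e)
  rwa [himg] at hle

end Invariance

end DimerAux

open DimerAux

/-- **Site-monotonicity for the dimer model: projection of an odd point onto an axis.**
If `z_i` is odd then `|Ω^{dim}({o,z})| ≤ |Ω^{dim}({o, z_i e_i})|`. -/
theorem dimer_count_le_axis_projection
    (d L : ℕ) [NeZero L] (hd : 2 ≤ d) (hL : Even L)
    (z : TorusPt d L) (i : Fin d) (hodd : Odd (z i).val) :
    dimerCount d L {torusOrigin d L, z} ≤
      dimerCount d L {torusOrigin d L, fun k : Fin d => if k = i then z i else 0} := by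
  classical
  set o : TorusPt d L := torusOrigin d L with ho
  set v : ℕ := (z i).val with hvdef
  set ap : TorusPt d L := fun k : Fin d => if k = i then z i else 0 with hap
  have hv : v % 2 = 1 := Nat.odd_iff.mp hodd
  have hL2 : L % 2 = 0 := Nat.even_iff.mp hL
  have hvL : v < L := ZMod.val_lt (z i)
  have hcast : ((v : ℕ) : ZMod L) = z i := ZMod.natCast_rightInverse (z i)
  have hthO : th i v o = ap := by
    funext k
    by_cases hk : k = i
    · rw [hk, th_apply_i]
      have h0 : o i = 0 := rfl
      have h1 : ap i = z i := by rw [hap]; simp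
      rw [h0, h1, sub_zero, hcast]
    · rw [th_apply_ne _ v _ hk]
      have h0 : o k = 0 := rfl
      have h1 : ap k = 0 := by rw [hap]; simp [hk]
      rw [h0, h1]
  have hthZ : th i v z = z - ap := by
    funext k
    by_cases hk : k = i
    · rw [hk, th_apply_i, hcast]
      have h1 : ap i = z i := by rw [hap]; simp
      rw [Pi.sub_apply, h1]
    · rw [th_apply_ne _ v _ hk]
      have h1 : ap k = 0 := by rw [hap]; simp [hk]
      rw [Pi.sub_apply, h1, sub_zero]
  have hoL : ¬ inL i v o := by
    unfold inL
    have h0 : o i = 0 := rfl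
    rw [h0, ZMod.val_zero]
    omega
  have hzL : inL i v z := by
    unfold inL
    rw [← hvdef]
    omega
  have hzap : inL i v ap := by
    rw [← hthO]
    exact inL_th' i v hv hvL hL2 hoL
  have hthzR : ¬ inL i v (th i v z) := not_inL_th i v hv hvL hL2 hzL
  have hthap : th i v ap = o := by rw [← hthO, th_invol]
  have hAL0 : AL i v ({o, z} : Finset (TorusPt d L)) = {z} := by
    ext x
    rw [mem_AL]
    simp only [Finset.mem_insert, Finset.mem_singleton]
    constructor
    · rintro ⟨rfl | rfl, hx⟩
      · exact absurd hx hoL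
      · rfl
    · rintro rfl
      exact ⟨Or.inr rfl, hzL⟩
  have hAR0 : AR i v ({o, z} : Finset (TorusPt d L)) = {ap} := by
    ext x
    rw [mem_AR]
    simp only [Finset.mem_insert, Finset.mem_singleton]
    constructor
    · rintro ⟨h1 | h1, h2⟩
      · have h3 := congrArg (th i v) h1
        rwa [th_invol, hthO] at h3
      · exact absurd (by rw [h1]; exact hzL) h2
    · rintro rfl
      rw [hthap]
      exact ⟨Or.inl rfl, hoL⟩
  have hAL1 : AL i v ({th i v z, z} : Finset (TorusPt d L)) = {z} := by
    ext x
    rw [mem_AL]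
    simp only [Finset.mem_insert, Finset.mem_singleton]
    constructor
    · rintro ⟨rfl | rfl, hx⟩
      · exact absurd hx hthzR
      · rfl
    · rintro rfl
      exact ⟨Or.inr rfl, hzL⟩
  have hAR1 : AR i v ({th i v z, z} : Finset (TorusPt d L)) = {z} := by
    ext x
    rw [mem_AR]
    simp only [Finset.mem_insert, Finset.mem_singleton]
    constructor
    · rintro ⟨h1 | h1, h2⟩
      · have h3 := congrArg (th i v) h1
        rwa [th_invol, th_invol] at h3
      · exact absurd (by rw [h1]; exact hzL) h2
    · rintro rfl
      exact ⟨Or.inl rfl, hthzR⟩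
  have hAL2 : AL i v ({o, ap} : Finset (TorusPt d L)) = {ap} := by
    ext x
    rw [mem_AL]
    simp only [Finset.mem_insert, Finset.mem_singleton]
    constructor
    · rintro ⟨rfl | rfl, hx⟩
      · exact absurd hx hoL
      · rfl
    · rintro rfl
      exact ⟨Or.inr rfl, hzap⟩
  have hAR2 : AR i v ({o, ap} : Finset (TorusPt d L)) = {ap} := by
    ext x
    rw [mem_AR]
    simp only [Finset.mem_insert, Finset.mem_singleton]
    constructor
    · rintro ⟨h1 | h1, h2⟩
      · have h3 := congrArg (th i v) h1
        rwa [th_invol, hthO] at h3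
      · exact absurd (by rw [h1]; exact hzap) h2
    · rintro rfl
      rw [hthap]
      exact ⟨Or.inl rfl, hoL⟩
  have hF1 : FF i v ({o, z} : Finset (TorusPt d L)) ⊆
      FF i v ({th i v z, z} : Finset (TorusPt d L)) := by
    intro σ hσ
    rw [mem_FF] at hσ ⊢
    intro x hx
    obtain ⟨a1, a2, a3, a4⟩ := hσ x hx
    simp only [Finset.mem_insert, Finset.mem_singleton, not_or] at a3 a4 ⊢
    refine ⟨a1, a2, ⟨?_, a3.2⟩, ⟨?_, a4.2⟩⟩
    · intro hc
      apply a4.2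
      rw [hc, th_invol]
    · intro hc
      apply a3.2
      have h3 := congrArg (th i v) hc
      rwa [th_invol, th_invol] at h3
  have hF2 : FF i v ({o, z} : Finset (TorusPt d L)) ⊆
      FF i v ({o, ap} : Finset (TorusPt d L)) := by
    intro σ hσ
    rw [mem_FF] at hσ ⊢
    intro x hx
    obtain ⟨a1, a2, a3, a4⟩ := hσ x hx
    simp only [Finset.mem_insert, Finset.mem_singleton, not_or] at a3 a4 ⊢
    refine ⟨a1, a2, ⟨a3.1, ?_⟩, ⟨a4.1, ?_⟩⟩
    · intro hc
      apply a4.1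
      rw [hc, hthap]
    · intro hc
      apply a3.1
      have h3 := congrArg (th i v) hc
      rwa [th_invol, hthap] at h3
  have hkey : 2 * Nat.card (SType ({o, z} : Finset (TorusPt d L))) ≤
      Nat.card (SType ({th i v z, z} : Finset (TorusPt d L))) +
        Nat.card (SType ({o, ap} : Finset (TorusPt d L))) := by
    rw [master i v hv hvL hL2 ({o, z} : Finset (TorusPt d L)),
        master i v hv hvL hL2 ({th i v z, z} : Finset (TorusPt d L)),
        master i v hv hvL hL2 ({o, ap} : Finset (TorusPt d L)),
        hAL0, hAR0, hAL1, hAR1, hAL2, hAR2]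
    calc 2 * ∑ σ ∈ FF i v ({o, z} : Finset (TorusPt d L)),
            halfCount i v ({z} ∪ σ) * halfCount i v ({ap} ∪ σ)
        = ∑ σ ∈ FF i v ({o, z} : Finset (TorusPt d L)),
            2 * (halfCount i v ({z} ∪ σ) * halfCount i v ({ap} ∪ σ)) := by
          rw [Finset.mul_sum]
      _ ≤ ∑ σ ∈ FF i v ({o, z} : Finset (TorusPt d L)),
            (halfCount i v ({z} ∪ σ) * halfCount i v ({z} ∪ σ) +
              halfCount i v ({ap} ∪ σ) * halfCount i v ({ap} ∪ σ)) := by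
          refine Finset.sum_le_sum (fun σ _ => ?_)
          have h9 : (2 * ((halfCount i v ({z} ∪ σ) : ℤ) * halfCount i v ({ap} ∪ σ)) : ℤ) ≤
              (halfCount i v ({z} ∪ σ) : ℤ) * halfCount i v ({z} ∪ σ) +
                (halfCount i v ({ap} ∪ σ) : ℤ) * halfCount i v ({ap} ∪ σ) := by
            nlinarith [sq_nonneg ((halfCount i v ({z} ∪ σ) : ℤ) - halfCount i v ({ap} ∪ σ))]
          exact_mod_cast h9
      _ = (∑ σ ∈ FF i v ({o, z} : Finset (TorusPt d L)),
              halfCount i v ({z} ∪ σ) * halfCount i v ({z} ∪ σ)) +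
            ∑ σ ∈ FF i v ({o, z} : Finset (TorusPt d L)),
              halfCount i v ({ap} ∪ σ) * halfCount i v ({ap} ∪ σ) :=
          Finset.sum_add_distrib
      _ ≤ _ := add_le_add (Finset.sum_le_sum_of_subset hF1) (Finset.sum_le_sum_of_subset hF2)
  have htrans : Nat.card (SType ({th i v z, z} : Finset (TorusPt d L))) =
      Nat.card (SType ({o, ap} : Finset (TorusPt d L))) := by
    have he : ∀ x y : TorusPt d L, torusAdj x y →
        torusAdj (transEquiv (ap - z) x) (transEquiv (ap - z) y) :=
      fun x y hxy => adj_add (ap - z) hxy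
    have he' : ∀ x y : TorusPt d L, torusAdj x y →
        torusAdj ((transEquiv (ap - z)).symm x) ((transEquiv (ap - z)).symm y) := by
      intro x y hxy
      have h3 := adj_add (-(ap - z)) hxy
      simpa [transEquiv, sub_eq_add_neg] using h3
    have h0 := card_SType_image (transEquiv (ap - z)) he he'
      ({th i v z, z} : Finset (TorusPt d L))
    have himg : ({th i v z, z} : Finset (TorusPt d L)).image (transEquiv (ap - z)) =
        {o, ap} := by
      rw [Finset.image_insert, Finset.image_singleton]
      have e1 : transEquiv (ap - z) (th i v z) = o := by
        show th i v z + (ap - z) = o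
        rw [hthZ]
        have : z - ap + (ap - z) = (0 : TorusPt d L) := by abel
        rw [this]
        rfl
      have e2 : transEquiv (ap - z) z = ap := by
        show z + (ap - z) = ap
        abel
      rw [e1, e2]
    rw [h0, himg]
  have hdim0 : dimerCount d L ({o, z} : Finset (TorusPt d L)) =
      Nat.card (SType ({o, z} : Finset (TorusPt d L))) := rfl
  have hdim2 : dimerCount d L ({o, ap} : Finset (TorusPt d L)) =
      Nat.card (SType ({o, ap} : Finset (TorusPt d L))) := rfl
  rw [hdim0, hdim2]
  omega
end

section
/- Let i ∈ {1,…,d} and let y ∈ T_L with y·e_i = 0 (possibly y = o). For all odd integers m, n with 0 < m ≤ n < L/2 one has |Ω^{dim}({o, y + n e_i})| + |Ω^{dim}({o, n e_i})| ≤ |Ω^{dim}({o, y + m e_i})| + |Ω^{dim}({o, m e_i})|; that is, the function n ↦ |Ω^{dim}({o, y + n e_i})| + |Ω^{dim}({o, n e_i})| is non-increasing over odd n in (0, L/2). -/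
instance inst_s16 {d L : ℕ} (x y : TorusPt d L) : Decidable (torusAdj x y) := by
  unfold torusAdj; infer_instance

def isMatch {d L : ℕ} (A : Finset (TorusPt d L)) (f : TorusPt d L → TorusPt d L) : Prop :=
  (∀ x ∈ A, f x = x) ∧
      ∀ x, x ∉ A → f x ∉ A ∧ f x ≠ x ∧ torusAdj x (f x) ∧ f (f x) = x

instance {d L : ℕ} [NeZero L] (A : Finset (TorusPt d L)) :
    DecidablePred (isMatch (d:=d) (L:=L) A) :=
  fun f => by unfold isMatch; infer_instance

lemma dimerCount_eq (d L : ℕ) (A : Finset (TorusPt d L)) :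
    dimerCount d L A = Nat.card {f // isMatch A f} := rfl

section Auto
variable {d L : ℕ}

/-- adjacency is preserved by translation -/
lemma torusAdj_add (x y c : TorusPt d L) (h : torusAdj x y) : torusAdj (x + c) (y + c) := by
  obtain ⟨j, hj | hj⟩ := h
  · exact ⟨j, Or.inl (by subst hj; funext k; by_cases hk : k = j <;>
      simp [Function.update, hk, Pi.add_apply] <;> ring)⟩
  · exact ⟨j, Or.inr (by subst hj; funext k; by_cases hk : k = j <;>
      simp [Function.update, hk, Pi.add_apply] <;> ring)⟩

/-- reflection in coordinate `i` with constant `c` -/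
def refl0 (i : Fin d) (c : ZMod L) (x : TorusPt d L) : TorusPt d L :=
  fun k => if k = i then c - x k else x k

lemma refl0_invol (i : Fin d) (c : ZMod L) : Function.Involutive (refl0 (L:=L) i c) := by
  intro x; funext k; by_cases hk : k = i <;> simp [refl0, hk]

lemma torusAdj_refl0 (i : Fin d) (c : ZMod L) (x y : TorusPt d L) (h : torusAdj x y) :
    torusAdj (refl0 i c x) (refl0 i c y) := by
  obtain ⟨j, hj | hj⟩ := h
  · refine ⟨j, ?_⟩
    by_cases hji : j = i
    · refine Or.inr ?_
      subst hj hji; funext k; by_cases hk : k = j <;> simp [refl0, Function.update, hk] <;> ring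
    · refine Or.inl ?_
      subst hj; funext k; by_cases hk : k = j
      · subst hk; simp [refl0, Function.update, hji]
      · by_cases hki : k = i <;> simp [refl0, Function.update, hk, hki, Ne.symm hji]
  · refine ⟨j, ?_⟩
    by_cases hji : j = i
    · refine Or.inl ?_
      subst hj hji; funext k; by_cases hk : k = j <;> simp [refl0, Function.update, hk] <;> ring
    · refine Or.inr ?_
      subst hj; funext k; by_cases hk : k = j
      · subst hk; simp [refl0, Function.update, hji]
      · by_cases hki : k = i <;> simp [refl0, Function.update, hk, hki, Ne.symm hji]

/-- conjugation by a graph automorphism preserves matchings -/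
lemma isMatch_conj (σ : Equiv.Perm (TorusPt d L))
    (hσ : ∀ x y, torusAdj x y → torusAdj (σ x) (σ y))
    (A : Finset (TorusPt d L)) (f : TorusPt d L → TorusPt d L)
    (hf : isMatch A f) : isMatch (A.image σ) (σ ∘ f ∘ σ.symm) := by
  obtain ⟨h1, h2⟩ := hf
  constructor
  · intro x hx
    rw [Finset.mem_image] at hx
    obtain ⟨a, ha, rfl⟩ := hx
    simp [h1 a ha]
  · intro x hx
    have hx' : σ.symm x ∉ A := by
      intro hc
      exact hx (Finset.mem_image.2 ⟨σ.symm x, hc, by simp⟩)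
    obtain ⟨c1, c2, c3, c4⟩ := h2 _ hx'
    refine ⟨?_, ?_, ?_, ?_⟩
    · intro hc
      rw [Finset.mem_image] at hc
      obtain ⟨a, ha, hae⟩ := hc
      exact c1 (by rwa [show a = f (σ.symm x) from σ.injective (by simpa using hae)] at ha)
    · intro hc
      exact c2 (by simpa using σ.injective (by simpa using hc))
    · simpa using hσ _ _ c3
    · simp [c4]

lemma dimerCount_image (σ : Equiv.Perm (TorusPt d L))
    (hσ : ∀ x y, torusAdj x y → torusAdj (σ x) (σ y))
    (hσ' : ∀ x y, torusAdj x y → torusAdj (σ.symm x) (σ.symm y))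
    (A : Finset (TorusPt d L)) : dimerCount d L A = dimerCount d L (A.image σ) := by
  rw [dimerCount_eq, dimerCount_eq]
  refine Nat.card_congr ⟨fun f => ⟨σ ∘ f.1 ∘ σ.symm, isMatch_conj σ hσ A f.1 f.2⟩,
    fun g => ⟨σ.symm ∘ g.1 ∘ σ, ?_⟩, fun f => by ext x : 2; simp, fun g => by ext x : 2; simp⟩
  have := isMatch_conj σ.symm hσ' (A.image σ) g.1 g.2
  rwa [Finset.image_image, show (⇑σ.symm ∘ ⇑σ) = id by ext z; simp, Finset.image_id] at this

/-- translation invariance -/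
lemma dimerCount_translate (A : Finset (TorusPt d L)) (c : TorusPt d L) :
    dimerCount d L A = dimerCount d L (A.image (· + c)) := by
  have := dimerCount_image (Equiv.addRight c) (fun x y h => torusAdj_add x y c h)
    (fun x y h => by simpa using torusAdj_add x y (-c) h) A
  simpa using this

/-- reflection invariance -/
lemma dimerCount_refl0 (i : Fin d) (c : ZMod L) (A : Finset (TorusPt d L)) :
    dimerCount d L A = dimerCount d L (A.image (refl0 i c)) := by
  exact dimerCount_image ((refl0_invol i c).toPerm _)
    (fun x y h => torusAdj_refl0 i c x y h)
    (fun x y h => torusAdj_refl0 i c x y h) A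
section Core
variable {d L : ℕ} [NeZero L] (i : Fin d)

/-- step up in coordinate `i` -/
def upE (x : TorusPt d L) : TorusPt d L := Function.update x i (x i + 1)

/-- lower half of the torus -/
def Lo (x : TorusPt d L) : Prop := (x i).val < L / 2

instance (x : TorusPt d L) : Decidable (Lo i x) := by unfold Lo; infer_instance

def lvlA : ZMod L := ((L / 2 - 1 : ℕ) : ZMod L)
def lvlB : ZMod L := ((L - 1 : ℕ) : ZMod L)

def bLevel (z : ZMod L) : Prop := z = lvlA ∨ z = lvlB

instance (z : ZMod L) : Decidable (bLevel (L := L) z) := by unfold bLevel; infer_instance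

/-- the set of crossing edges used by `f`, encoded by lower endpoints -/
def bmap (f : TorusPt d L → TorusPt d L) : Finset (TorusPt d L) :=
  Finset.univ.filter (fun w => bLevel (w i) ∧ f w = upE i w)


lemma upE_ne (hL2 : 2 ≤ L) (x : TorusPt d L) : upE i x ≠ x := by
  intro h
  have h1 : (upE i x) i = x i := by rw [h]
  have h3 : x i + 1 = x i := by simpa [upE] using h1
  have h2 : (1 : ZMod L) = 0 := by
    have := congrArg (· - x i) h3
    simpa using this
  haveI : Fact (1 < L) := ⟨by omega⟩
  have := congrArg ZMod.val h2
  simp only [ZMod.val_one, ZMod.val_zero] at this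
  omega

lemma val_lvlA (hL2 : 2 ≤ L) : (lvlA : ZMod L).val = L / 2 - 1 := ZMod.val_cast_of_lt (by omega)

lemma val_lvlB (hL2 : 2 ≤ L) : (lvlB : ZMod L).val = L - 1 := ZMod.val_cast_of_lt (by omega)

lemma lo_lvlA (hL2 : 2 ≤ L) {w : TorusPt d L} (h : w i = lvlA) : Lo i w := by
  unfold Lo; rw [h, val_lvlA hL2]; omega

lemma hi_lvlB (hL2 : 2 ≤ L) {w : TorusPt d L} (h : w i = lvlB) : ¬ Lo i w := by
  unfold Lo; rw [h, val_lvlB hL2]; omega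

lemma crossing_up (hL2 : 2 ≤ L) {x y : TorusPt d L} (h : y = upE i x) (hxy : Lo i x ↔ ¬ Lo i y) :
    bLevel (x i) := by
  have hyi : y i = x i + 1 := by rw [h]; simp [upE, Function.update]
  have hval : (y i).val = ((x i).val + 1) % L := by
    haveI : Fact (1 < L) := ⟨by omega⟩
    rw [hyi, ZMod.val_add, ZMod.val_one]
  have hvx := (x i).val_lt
  unfold Lo at hxy
  rw [hval] at hxy
  by_cases hc : (x i).val + 1 < L
  · left
    refine ZMod.val_injective L ?_
    rw [val_lvlA hL2]
    rw [Nat.mod_eq_of_lt hc] at hxy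
    omega
  · right
    refine ZMod.val_injective L ?_
    rw [val_lvlB hL2]
    omega

/-- an adjacency step changing side must be a recorded crossing edge -/
lemma crossing (hL2 : 2 ≤ L) {x y : TorusPt d L} (hadj : torusAdj x y) (hxy : (Lo i x ↔ ¬ Lo i y)) :
    (bLevel (x i) ∧ y = upE i x) ∨ (bLevel (y i) ∧ x = upE i y) := by
  obtain ⟨j, hj | hj⟩ := hadj
  · by_cases hji : j = i
    · rw [hji] at hj
      exact Or.inl ⟨crossing_up i hL2 hj hxy, hj⟩
    · exfalso
      have : y i = x i := by rw [hj]; simp [Function.update, Ne.symm hji]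
      unfold Lo at hxy; rw [this] at hxy; tauto
  · by_cases hji : j = i
    · rw [hji] at hj
      have hx : x = upE i y := by
        rw [hj]; funext k
        by_cases hk : k = i <;> simp [upE, Function.update, hk]
      refine Or.inr ⟨crossing_up i hL2 hx ?_, hx⟩
      tauto
    · exfalso
      have : y i = x i := by rw [hj]; simp [Function.update, Ne.symm hji]
      unfold Lo at hxy; rw [this] at hxy; tauto

/-- if `f` uses a crossing edge at `x`, then any `g` with the same crossing set
matches `f x` back to `x` -/
lemma sync (hL2 : 2 ≤ L) {A A' : Finset (TorusPt d L)} {f g : TorusPt d L → TorusPt d L}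
    (hf : isMatch A f) (hg : isMatch A' g) (hfg : bmap i f = bmap i g)
    {x : TorusPt d L} (hx : x ∉ A) (hLo : Lo i x ↔ ¬ Lo i (f x)) :
    g (f x) = x := by
  obtain ⟨hm1, hm2, hm3, hm4⟩ := hf.2 x hx
  rcases crossing i hL2 hm3 hLo with ⟨hb, hbe⟩ | ⟨hb, hbe⟩
  · -- f x = upE x, so x ∈ bmap f = bmap g
    have hxf : x ∈ bmap i f := by
      simp only [bmap, Finset.mem_filter, Finset.mem_univ, true_and]
      exact ⟨hb, hbe⟩
    rw [hfg] at hxf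
    simp only [bmap, Finset.mem_filter, Finset.mem_univ, true_and] at hxf
    have hgx : g x = f x := by rw [hxf.2, hbe]
    have hxA' : x ∉ A' := by
      intro hc
      exact upE_ne i hL2 x (by rw [← hxf.2, hg.1 x hc])
    rw [← hgx]
    exact (hg.2 x hxA').2.2.2
  · -- x = upE (f x), so f x ∈ bmap f = bmap g
    have hxf : f x ∈ bmap i f := by
      simp only [bmap, Finset.mem_filter, Finset.mem_univ, true_and]
      exact ⟨hb, by rw [hm4]; exact hbe⟩
    rw [hfg] at hxf
    simp only [bmap, Finset.mem_filter, Finset.mem_univ, true_and] at hxf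
    rw [hxf.2, ← hbe]

/-- the glue of two matchings along the two halves -/
def glue (f g : TorusPt d L → TorusPt d L) : TorusPt d L → TorusPt d L :=
  fun x => if Lo i x then f x else g x

lemma glue_isMatch (hL2 : 2 ≤ L) {u u' w w' : TorusPt d L}
    (hu : Lo i u) (hu' : Lo i u') (hw : ¬ Lo i w) (hw' : ¬ Lo i w')
    {f g : TorusPt d L → TorusPt d L}
    (hf : isMatch {u, w} f) (hg : isMatch {u', w'} g) (hfg : bmap i f = bmap i g) :
    isMatch {u, w'} (glue i f g) ∧ bmap i (glue i f g) = bmap i f := by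
  have memp : ∀ (a b x : TorusPt d L), x ∉ ({a, b} : Finset (TorusPt d L)) ↔ x ≠ a ∧ x ≠ b := by
    intro a b x; simp [not_or]
  constructor
  · constructor
    · intro x hx
      rcases Finset.mem_insert.mp hx with rfl | hx
      · simp only [glue, if_pos hu]
        exact hf.1 x (Finset.mem_insert_self x _)
      · rw [Finset.mem_singleton] at hx; subst hx
        simp only [glue, if_neg hw']
        exact hg.1 x (by simp)
    · intro x hx
      rw [memp] at hx
      obtain ⟨hxu, hxw'⟩ := hx
      by_cases hlo : Lo i x
      · -- lower side: driven by f
        have hxA : x ∉ ({u, w} : Finset (TorusPt d L)) := by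
          rw [memp]; exact ⟨hxu, fun hc => hw (hc ▸ hlo)⟩
        obtain ⟨c1, c2, c3, c4⟩ := hf.2 x hxA
        have hgx : glue i f g x = f x := if_pos hlo
        rw [memp] at c1
        refine ⟨?_, by rw [hgx]; exact c2, by rw [hgx]; exact c3, ?_⟩
        · rw [hgx, memp]
          refine ⟨c1.1, ?_⟩
          by_cases hlf : Lo i (f x)
          · exact fun hc => hw' (hc ▸ hlf)
          · -- crossing: f x ∉ A' by sync
            have hs : g (f x) = x := sync i hL2 hf hg hfg hxA (by tauto)
            intro hc
            have : g (f x) = f x := hg.1 _ (by rw [hc]; simp)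
            rw [hs] at this
            exact hxw' (this.trans hc)
        · rw [hgx]
          by_cases hlf : Lo i (f x)
          · rw [glue, if_pos hlf]; exact c4
          · rw [glue, if_neg hlf]
            exact sync i hL2 hf hg hfg hxA (by tauto)
      · -- upper side: driven by g
        have hxA : x ∉ ({u', w'} : Finset (TorusPt d L)) := by
          rw [memp]; exact ⟨fun hc => hlo (hc ▸ hu'), hxw'⟩
        obtain ⟨c1, c2, c3, c4⟩ := hg.2 x hxA
        have hgx : glue i f g x = g x := if_neg hlo
        rw [memp] at c1
        refine ⟨?_, by rw [hgx]; exact c2, by rw [hgx]; exact c3, ?_⟩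
        · rw [hgx, memp]
          refine ⟨?_, c1.2⟩
          by_cases hlf : Lo i (g x)
          · -- crossing: g x ∉ A_f by sync
            have hs : f (g x) = x := sync i hL2 hg hf hfg.symm hxA (by tauto)
            intro hc
            have : f (g x) = g x := hf.1 _ (by rw [hc]; simp)
            rw [hs] at this
            exact hxu (this.trans hc)
          · exact fun hc => hlf (hc ▸ hu)
        · rw [hgx]
          by_cases hlf : Lo i (g x)
          · rw [glue, if_pos hlf]
            exact sync i hL2 hg hf hfg.symm hxA (by tauto)
          · rw [glue, if_neg hlf]; exact c4
  · -- bmap of the glue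
    ext w0
    simp only [bmap, Finset.mem_filter, Finset.mem_univ, true_and]
    by_cases hlo : Lo i w0
    · rw [glue, if_pos hlo]
    · rw [glue, if_neg hlo]
      constructor
      · rintro ⟨hb, hbe⟩
        have : w0 ∈ bmap i g := by
          simp only [bmap, Finset.mem_filter, Finset.mem_univ, true_and]; exact ⟨hb, hbe⟩
        rw [← hfg] at this
        simpa only [bmap, Finset.mem_filter, Finset.mem_univ, true_and] using this
      · rintro ⟨hb, hbe⟩
        have : w0 ∈ bmap i g := by
          rw [← hfg]
          simp only [bmap, Finset.mem_filter, Finset.mem_univ, true_and]; exact ⟨hb, hbe⟩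
        simpa only [bmap, Finset.mem_filter, Finset.mem_univ, true_and] using this
end Core
section Fib
variable {d L : ℕ} [NeZero L] (i : Fin d)

noncomputable def fibCard (A B : Finset (TorusPt d L)) : ℕ :=
  Nat.card {f // isMatch A f ∧ bmap i f = B}

lemma dimerCount_eq_sum (A : Finset (TorusPt d L)) :
    dimerCount d L A = ∑ B : Finset (TorusPt d L), fibCard i A B := by
  rw [dimerCount_eq, Nat.card_eq_fintype_card, Fintype.card_subtype,
    Finset.card_eq_sum_card_fiberwise (f := fun f => bmap i f) (t := Finset.univ)
      (fun _ _ => Finset.mem_univ _)]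
  refine Finset.sum_congr rfl fun B _ => ?_
  rw [Finset.filter_filter, fibCard, Nat.card_eq_fintype_card, Fintype.card_subtype]

lemma glue_glue (f g : TorusPt d L → TorusPt d L) :
    glue i (glue i f g) (glue i g f) = f := by
  funext x
  by_cases hlo : Lo i x <;> simp [glue, hlo]

lemma fibCard_exchange (hL2 : 2 ≤ L) {u u' w w' : TorusPt d L}
    (hu : Lo i u) (hu' : Lo i u') (hw : ¬ Lo i w) (hw' : ¬ Lo i w')
    (B : Finset (TorusPt d L)) :
    fibCard i {u, w} B * fibCard i {u', w'} B =
      fibCard i {u, w'} B * fibCard i {u', w} B := by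
  rw [fibCard, fibCard, fibCard, fibCard, ← Nat.card_prod, ← Nat.card_prod]
  refine Nat.card_congr ⟨fun p =>
    (⟨glue i p.1.1 p.2.1, ?_⟩, ⟨glue i p.2.1 p.1.1, ?_⟩), fun q =>
    (⟨glue i q.1.1 q.2.1, ?_⟩, ⟨glue i q.2.1 q.1.1, ?_⟩), fun p => ?_, fun q => ?_⟩
  · obtain ⟨gm, gb⟩ := glue_isMatch i hL2 hu hu' hw hw' p.1.2.1 p.2.2.1
      (p.1.2.2.trans p.2.2.2.symm)
    exact ⟨gm, gb.trans p.1.2.2⟩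
  · obtain ⟨gm, gb⟩ := glue_isMatch i hL2 hu' hu hw' hw p.2.2.1 p.1.2.1
      (p.2.2.2.trans p.1.2.2.symm)
    exact ⟨gm, gb.trans p.2.2.2⟩
  · obtain ⟨gm, gb⟩ := glue_isMatch i hL2 hu hu' hw' hw q.1.2.1 q.2.2.1
      (q.1.2.2.trans q.2.2.2.symm)
    exact ⟨gm, gb.trans q.1.2.2⟩
  · obtain ⟨gm, gb⟩ := glue_isMatch i hL2 hu' hu hw hw' q.2.2.1 q.1.2.1
      (q.2.2.2.trans q.1.2.2.symm)
    exact ⟨gm, gb.trans q.2.2.2⟩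
  · refine Prod.ext (Subtype.ext ?_) (Subtype.ext ?_) <;>
      simp only [glue_glue] <;> rfl
  · refine Prod.ext (Subtype.ext ?_) (Subtype.ext ?_) <;>
      simp only [glue_glue] <;> rfl

lemma lvlA_eq (hL : Even L) (hL2 : 2 ≤ L) :
    (lvlA : ZMod L) = ((L / 2 : ℕ) : ZMod L) - 1 := by
  unfold lvlA
  have h12 : (1:ℕ) ≤ L / 2 := by omega
  rw [Nat.cast_sub h12]
  norm_num

lemma lvlB_eq (hL2 : 2 ≤ L) : (lvlB : ZMod L) = (-1 : ZMod L) := by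
  unfold lvlB
  rw [Nat.cast_sub (by omega)]
  simp

lemma half_add_half (hL : Even L) (hL2 : 2 ≤ L) :
    ((L / 2 : ℕ) : ZMod L) + ((L / 2 : ℕ) : ZMod L) = 0 := by
  rw [← Nat.cast_add, show L / 2 + L / 2 = L by obtain ⟨k, hk⟩ := hL; omega]
  exact ZMod.natCast_self L

lemma theta_upE (hL : Even L) (hL2 : 2 ≤ L) {w : TorusPt d L} (hb : bLevel (w i)) :
    refl0 i (-1 : ZMod L) w = upE i w := by
  funext k
  by_cases hk : k = i
  · rw [hk]
    have e1 : refl0 i (-1 : ZMod L) w i = -1 - w i := by simp [refl0]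
    have e2 : upE i w i = w i + 1 := by simp [upE]
    rw [e1, e2]
    rcases hb with h | h <;> rw [h]
    · rw [lvlA_eq hL hL2]
      linear_combination -half_add_half hL hL2
    · rw [lvlB_eq hL2]; ring
  · simp [refl0, upE, Function.update, hk]

lemma match_flip {A : Finset (TorusPt d L)} {f : TorusPt d L → TorusPt d L}
    (hf : isMatch A f) {a b : TorusPt d L} (hab : a ≠ b) : f a = b ↔ f b = a := by
  constructor
  · intro h
    have ha : a ∉ A := fun hc => hab ((hf.1 a hc).symm.trans h)
    rw [← h]; exact (hf.2 a ha).2.2.2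
  · intro h
    have hb' : b ∉ A := fun hc => hab.symm (((hf.1 b hc).symm).trans h)
    rw [← h]; exact (hf.2 b hb').2.2.2

lemma bmap_conj (hL : Even L) (hL2 : 2 ≤ L) {A : Finset (TorusPt d L)}
    {f : TorusPt d L → TorusPt d L} (hf : isMatch A f) :
    bmap i (refl0 i (-1 : ZMod L) ∘ f ∘ refl0 i (-1 : ZMod L)) = bmap i f := by
  ext w
  simp only [bmap, Finset.mem_filter, Finset.mem_univ, true_and, Function.comp_apply]
  refine and_congr_right fun hb => ?_
  have h1 : refl0 i (-1 : ZMod L) w = upE i w := theta_upE i hL hL2 hb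
  have hne : upE i w ≠ w := upE_ne i hL2 w
  rw [h1]
  have h2 : refl0 i (-1 : ZMod L) (upE i w) = w := by rw [← h1]; exact refl0_invol i (-1) w
  constructor
  · intro h
    have h3 := congrArg (refl0 i (-1 : ZMod L)) h
    rw [refl0_invol i (-1 : ZMod L)] at h3
    rw [h2] at h3
    exact (match_flip hf hne).mp h3
  · intro h
    have h3 : f (upE i w) = w := (match_flip hf (Ne.symm hne)).mp h
    rw [h3]
    exact h1

lemma fibCard_theta (hL : Even L) (hL2 : 2 ≤ L) (A B : Finset (TorusPt d L)) :
    fibCard i A B = fibCard i (A.image (refl0 i (-1 : ZMod L))) B := by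
  have hadj : ∀ x y, torusAdj x y → torusAdj (refl0 i (-1 : ZMod L) x) (refl0 i (-1 : ZMod L) y) :=
    fun x y h => torusAdj_refl0 i (-1 : ZMod L) x y h
  have hconj : ∀ (S : Finset (TorusPt d L)) (f : TorusPt d L → TorusPt d L),
      isMatch S f → isMatch (S.image (refl0 i (-1 : ZMod L))) (refl0 i (-1 : ZMod L) ∘ f ∘ refl0 i (-1 : ZMod L)) := by
    intro S f hf
    exact isMatch_conj ⟨refl0 i (-1 : ZMod L), refl0 i (-1 : ZMod L), refl0_invol i (-1 : ZMod L), refl0_invol i (-1)⟩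
      hadj S f hf
  have himg2 : ∀ S : Finset (TorusPt d L),
      (S.image (refl0 i (-1 : ZMod L))).image (refl0 i (-1 : ZMod L)) = S := by
    intro S
    rw [Finset.image_image,
      show (refl0 i (-1 : ZMod L)) ∘ (refl0 i (-1 : ZMod L)) = id from funext (refl0_invol i (-1 : ZMod L)),
      Finset.image_id]
  refine Nat.card_congr ⟨fun f => ⟨refl0 i (-1 : ZMod L) ∘ f.1 ∘ refl0 i (-1 : ZMod L), ?_, ?_⟩,
    fun g => ⟨refl0 i (-1 : ZMod L) ∘ g.1 ∘ refl0 i (-1 : ZMod L), ?_, ?_⟩, fun f => ?_, fun g => ?_⟩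
  · exact hconj A f.1 f.2.1
  · exact (bmap_conj i hL hL2 f.2.1).trans f.2.2
  · have := hconj _ g.1 g.2.1
    rwa [himg2] at this
  · exact (bmap_conj i hL hL2 g.2.1).trans g.2.2
  · refine Subtype.ext ?_
    funext x
    simp only [Function.comp_apply]
    rw [refl0_invol i (-1 : ZMod L), refl0_invol i (-1 : ZMod L)]
  · refine Subtype.ext ?_
    funext x
    simp only [Function.comp_apply]
    rw [refl0_invol i (-1 : ZMod L), refl0_invol i (-1 : ZMod L)]
end Fib
lemma quad (a11 a12 a21 a22 b11 b12 b21 b22 s11 s12 s21 s22 : ℕ)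
    (e1 : a11*b11 = s11*s11) (e2 : a11*b12 = s12*s11) (e3 : a11*b21 = s11*s12)
    (e4 : a11*b22 = s12*s12) (e5 : a12*b11 = s11*s21) (e6 : a12*b12 = s12*s21)
    (e7 : a12*b21 = s11*s22) (e8 : a12*b22 = s12*s22) (e9 : a21*b11 = s21*s11)
    (e10 : a21*b12 = s22*s11) (e11 : a21*b21 = s21*s12) (e12 : a21*b22 = s22*s12)
    (e13 : a22*b11 = s21*s21) (e14 : a22*b12 = s22*s21) (e15 : a22*b21 = s21*s22)
    (e16 : a22*b22 = s22*s22) :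
    2*(s11+s12+s21+s22) ≤ (a11+a12+a21+a22) + (b11+b12+b21+b22) := by
  have hPQ : ((a11+a12+a21+a22 : ℕ) : ℤ) * ((b11+b12+b21+b22 : ℕ) : ℤ) =
      ((s11+s12+s21+s22 : ℕ) : ℤ) ^ 2 := by
    push_cast
    have := e1; have := e16
    zify at e1 e2 e3 e4 e5 e6 e7 e8 e9 e10 e11 e12 e13 e14 e15 e16
    linear_combination e1 + e2 + e3 + e4 + e5 + e6 + e7 + e8 + e9 + e10 + e11 + e12 +
      e13 + e14 + e15 + e16
  zify
  have h3 : (2*((s11+s12+s21+s22 : ℕ) : ℤ))^2 ≤ (((a11+a12+a21+a22 : ℕ) : ℤ) + ((b11+b12+b21+b22 : ℕ) : ℤ))^2 := by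
    nlinarith [hPQ, sq_nonneg (((a11+a12+a21+a22 : ℕ) : ℤ) - ((b11+b12+b21+b22 : ℕ) : ℤ))]
  have h4 := (pow_le_pow_iff_left₀ (by positivity) (by positivity) two_ne_zero).mp h3
  push_cast at h4 ⊢
  linarith
section Asm
variable {d L : ℕ} [NeZero L]

noncomputable def Fc (d L : ℕ) (i : Fin d) (a : ℕ) : ℕ :=
  dimerCount d L {torusOrigin d L, axisPt d L i a}
noncomputable def Gc (d L : ℕ) (i : Fin d) (y : TorusPt d L) (a : ℕ) : ℕ :=
  dimerCount d L {torusOrigin d L, y + axisPt d L i a}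
noncomputable def Hc (d L : ℕ) (i : Fin d) (y : TorusPt d L) (a : ℕ) : ℕ :=
  Gc d L i y a + Fc d L i a

variable (i : Fin d) (y : TorusPt d L)

lemma cast_sub_zmod {u v : ℕ} (h : v ≤ u) : ((u - v : ℕ) : ZMod L) = (u : ZMod L) - v := by
  rw [Nat.cast_sub h]

lemma apt_add_neg {u v : ℕ} (h : v ≤ u) :
    axisPt d L i u + -(axisPt d L i v) = axisPt d L i (u - v) := by
  funext k
  by_cases hk : k = i <;> simp [axisPt, hk, cast_sub_zmod h, sub_eq_add_neg] <;> ring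

lemma apt_cancel (v : ℕ) : axisPt d L i v + -(axisPt d L i v) = torusOrigin d L := by
  funext k
  by_cases hk : k = i <;> simp [axisPt, torusOrigin, hk] <;> ring

lemma yapt_add_neg {u v : ℕ} (h : v ≤ u) :
    (y + axisPt d L i u) + -(axisPt d L i v) = y + axisPt d L i (u - v) := by
  funext k
  by_cases hk : k = i <;> simp [axisPt, hk, cast_sub_zmod h, sub_eq_add_neg] <;> ring

lemma yapt_cancel (v : ℕ) : (y + axisPt d L i v) + -(y + axisPt d L i v) = torusOrigin d L := by
  funext k
  by_cases hk : k = i <;> simp [axisPt, torusOrigin, hk] <;> ring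

lemma yapt_sub_yapt {u v : ℕ} (h : v ≤ u) :
    (y + axisPt d L i u) + -(y + axisPt d L i v) = axisPt d L i (u - v) := by
  funext k
  by_cases hk : k = i <;> simp [axisPt, hk, cast_sub_zmod h, sub_eq_add_neg] <;> ring

lemma yapt_sub_big {u v : ℕ} (h : v ≤ u) :
    (y + axisPt d L i v) + -(axisPt d L i u) = y + -(axisPt d L i (u - v)) := by
  funext k
  by_cases hk : k = i <;> simp [axisPt, hk, cast_sub_zmod h, sub_eq_add_neg] <;> ring

lemma refl0_origin : refl0 i (0 : ZMod L) (torusOrigin d L) = torusOrigin d L := by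
  funext k
  by_cases hk : k = i <;> simp [refl0, torusOrigin, hk]

variable (hy : y i = 0)

include hy in
lemma refl0_yneg (n : ℕ) :
    refl0 i (0 : ZMod L) (y + -(axisPt d L i n)) = y + axisPt d L i n := by
  funext k
  by_cases hk : k = i <;> simp [refl0, axisPt, hk, hy] <;> ring

/-- identification lemmas -/
lemma idA {u v : ℕ} (h : v ≤ u) :
    dimerCount d L {axisPt d L i v, axisPt d L i u} = Fc d L i (u - v) := by
  rw [dimerCount_translate _ (-(axisPt d L i v))]
  unfold Fc
  congr 1
  rw [Finset.image_insert, Finset.image_singleton]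
  show ({axisPt d L i v + -(axisPt d L i v), axisPt d L i u + -(axisPt d L i v)} : Finset _) = _
  rw [apt_cancel, apt_add_neg i h]

include hy in
lemma idB {u v : ℕ} (h : v ≤ u) :
    dimerCount d L {axisPt d L i v, y + axisPt d L i u} = Gc d L i y (u - v) := by
  rw [dimerCount_translate _ (-(axisPt d L i v))]
  unfold Gc
  congr 1
  rw [Finset.image_insert, Finset.image_singleton]
  show ({axisPt d L i v + -(axisPt d L i v), (y + axisPt d L i u) + -(axisPt d L i v)} :
    Finset _) = _
  rw [apt_cancel, yapt_add_neg i y h]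

include hy in
lemma idC {u v : ℕ} (h : v ≤ u) :
    dimerCount d L {y + axisPt d L i v, axisPt d L i u} = Gc d L i y (u - v) := by
  rw [dimerCount_translate _ (-(axisPt d L i u))]
  have himg : ({y + axisPt d L i v, axisPt d L i u} : Finset (TorusPt d L)).image
      (· + -(axisPt d L i u)) = {y + -(axisPt d L i (u - v)), torusOrigin d L} := by
    rw [Finset.image_insert, Finset.image_singleton]
    show ({(y + axisPt d L i v) + -(axisPt d L i u), axisPt d L i u + -(axisPt d L i u)} :
      Finset _) = _
    rw [apt_cancel, yapt_sub_big i y h]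
  rw [himg, dimerCount_refl0 i 0]
  unfold Gc
  congr 1
  rw [Finset.image_insert, Finset.image_singleton, refl0_origin, refl0_yneg i y hy,
    Finset.pair_comm]

lemma idD {u v : ℕ} (h : v ≤ u) :
    dimerCount d L {y + axisPt d L i v, y + axisPt d L i u} = Fc d L i (u - v) := by
  rw [dimerCount_translate _ (-(y + axisPt d L i v))]
  unfold Fc
  congr 1
  rw [Finset.image_insert, Finset.image_singleton]
  show ({(y + axisPt d L i v) + -(y + axisPt d L i v),
    (y + axisPt d L i u) + -(y + axisPt d L i v)} : Finset _) = _
  rw [yapt_cancel, yapt_sub_yapt i y h]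

/-- symmetry -/
lemma refl0_apt (k : ℕ) (h : k ≤ L) :
    refl0 i (0 : ZMod L) (axisPt d L i k) = axisPt d L i (L - k) := by
  funext j
  by_cases hj : j = i <;>
    simp [refl0, axisPt, hj, cast_sub_zmod h, ZMod.natCast_self] <;> ring

include hy in
lemma refl0_yapt0 (k : ℕ) (h : k ≤ L) :
    refl0 i (0 : ZMod L) (y + axisPt d L i k) = y + axisPt d L i (L - k) := by
  funext j
  by_cases hj : j = i <;>
    simp [refl0, axisPt, hj, hy, cast_sub_zmod h, ZMod.natCast_self] <;> ring

lemma Fc_sym (k : ℕ) (h : k ≤ L) : Fc d L i k = Fc d L i (L - k) := by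
  unfold Fc
  rw [dimerCount_refl0 i 0]
  congr 1
  rw [Finset.image_insert, Finset.image_singleton, refl0_origin, refl0_apt i k h]

include hy in
lemma Gc_sym (k : ℕ) (h : k ≤ L) : Gc d L i y k = Gc d L i y (L - k) := by
  unfold Gc
  rw [dimerCount_refl0 i 0]
  congr 1
  rw [Finset.image_insert, Finset.image_singleton, refl0_origin, refl0_yapt0 i y hy k h]

include hy in
lemma Hc_sym (k : ℕ) (h : k ≤ L) : Hc d L i y k = Hc d L i y (L - k) := by
  rw [Hc, Hc, Fc_sym i k h, Gc_sym i y hy k h]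

/-- Lo/Hi facts and theta images -/
lemma apt_apply (a : ℕ) : (axisPt d L i a) i = ((a : ℕ) : ZMod L) := by simp [axisPt]

lemma yapt_apply (a : ℕ) : (y + axisPt d L i a) i = y i + ((a : ℕ) : ZMod L) := by
  simp [axisPt]

lemma lo_apt (a : ℕ) (h : a < L / 2) : Lo i (axisPt d L i a) := by
  unfold Lo
  rw [apt_apply, ZMod.val_cast_of_lt (by omega)]
  exact h

include hy in
lemma lo_yapt (a : ℕ) (h : a < L / 2) : Lo i (y + axisPt d L i a) := by
  unfold Lo
  rw [yapt_apply, hy, zero_add, ZMod.val_cast_of_lt (by omega)]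
  exact h

lemma hi_apt (a : ℕ) (h1 : L / 2 ≤ a) (h2 : a < L) : ¬ Lo i (axisPt d L i a) := by
  unfold Lo
  rw [apt_apply, ZMod.val_cast_of_lt h2]
  omega

include hy in
lemma hi_yapt (a : ℕ) (h1 : L / 2 ≤ a) (h2 : a < L) : ¬ Lo i (y + axisPt d L i a) := by
  unfold Lo
  rw [yapt_apply, hy, zero_add, ZMod.val_cast_of_lt h2]
  omega

lemma neg_one_eq (hL2 : 2 ≤ L) : ((L - 1 : ℕ) : ZMod L) = (-1 : ZMod L) := by
  rw [Nat.cast_sub (by omega)]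
  simp

lemma theta_apt (hL2 : 2 ≤ L) (a : ℕ) (h : a ≤ L - 1) :
    refl0 i (-1 : ZMod L) (axisPt d L i a) = axisPt d L i (L - 1 - a) := by
  funext j
  by_cases hj : j = i <;>
    simp [refl0, axisPt, hj, cast_sub_zmod h, neg_one_eq (L := L) hL2, sub_eq_add_neg] <;> ring

include hy in
lemma theta_yapt (hL2 : 2 ≤ L) (a : ℕ) (h : a ≤ L - 1) :
    refl0 i (-1 : ZMod L) (y + axisPt d L i a) = y + axisPt d L i (L - 1 - a) := by
  funext j
  by_cases hj : j = i <;>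
    simp [refl0, axisPt, hj, hy, cast_sub_zmod h, neg_one_eq (L := L) hL2, sub_eq_add_neg] <;>
    ring

lemma fibCard_flip (hL : Even L) (hL2 : 2 ≤ L) (U V : TorusPt d L)
    (B : Finset (TorusPt d L)) :
    fibCard i {U, V} B =
      fibCard i {refl0 i (-1 : ZMod L) U, refl0 i (-1 : ZMod L) V} B := by
  rw [fibCard_theta i hL hL2 {U, V} B]
  congr 1
  rw [Finset.image_insert, Finset.image_singleton]

include hy in
lemma convex (hL : Even L) (hL2 : 2 ≤ L) (s s' : ℕ) (hs : s < L / 2) (hs' : s' < L / 2) :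
    2 * Hc d L i y (L - 1 - (s + s')) ≤ Hc d L i y (L - 1 - 2 * s) + Hc d L i y (L - 1 - 2 * s') := by
  have hLb : 2 * (L / 2) = L := by obtain ⟨t, ht⟩ := hL; omega
  -- the eight points
  set P1 := axisPt d L i s with hP1e
  set P2 := y + axisPt d L i s with hP2e
  set Q1 := axisPt d L i s' with hQ1e
  set Q2 := y + axisPt d L i s' with hQ2e
  set W1 := axisPt d L i (L - 1 - s) with hW1e
  set W2 := y + axisPt d L i (L - 1 - s) with hW2e
  set V1 := axisPt d L i (L - 1 - s') with hV1e
  set V2 := y + axisPt d L i (L - 1 - s') with hV2e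
  have hLoP1 : Lo i P1 := lo_apt i s hs
  have hLoP2 : Lo i P2 := lo_yapt i y hy s hs
  have hLoQ1 : Lo i Q1 := lo_apt i s' hs'
  have hLoQ2 : Lo i Q2 := lo_yapt i y hy s' hs'
  have hHiW1 : ¬ Lo i W1 := hi_apt i _ (by omega) (by omega)
  have hHiW2 : ¬ Lo i W2 := hi_yapt i y hy _ (by omega) (by omega)
  have hHiV1 : ¬ Lo i V1 := hi_apt i _ (by omega) (by omega)
  have hHiV2 : ¬ Lo i V2 := hi_yapt i y hy _ (by omega) (by omega)
  have hTQ1 : refl0 i (-1 : ZMod L) Q1 = V1 := theta_apt i hL2 s' (by omega)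
  have hTQ2 : refl0 i (-1 : ZMod L) Q2 = V2 := theta_yapt i y hy hL2 s' (by omega)
  have harg : L - 1 - (L - 1 - s) = s := by omega
  have hTW1 : refl0 i (-1 : ZMod L) W1 = P1 := by
    rw [hW1e, hP1e, theta_apt i hL2 (L - 1 - s) (by omega), harg]
  have hTW2 : refl0 i (-1 : ZMod L) W2 = P2 := by
    rw [hW2e, hP2e, theta_yapt i y hy hL2 (L - 1 - s) (by omega), harg]
  -- per-fiber inequality
  have perB : ∀ B : Finset (TorusPt d L),
      2 * (fibCard i {P1, V1} B + fibCard i {P1, V2} B +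
        fibCard i {P2, V1} B + fibCard i {P2, V2} B) ≤
      (fibCard i {P1, W1} B + fibCard i {P1, W2} B +
        fibCard i {P2, W1} B + fibCard i {P2, W2} B) +
      (fibCard i {Q1, V1} B + fibCard i {Q1, V2} B +
        fibCard i {Q2, V1} B + fibCard i {Q2, V2} B) := by
    intro B
    have hf : ∀ (Qb Wa Pa Vb : TorusPt d L), refl0 i (-1 : ZMod L) Qb = Vb →
        refl0 i (-1 : ZMod L) Wa = Pa → fibCard i {Qb, Wa} B = fibCard i {Pa, Vb} B := by
      intro Qb Wa Pa Vb h1 h2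
      rw [fibCard_flip i hL hL2, h1, h2, Finset.pair_comm]
    have hf11 := hf Q1 W1 P1 V1 hTQ1 hTW1
    have hf12 := hf Q2 W1 P1 V2 hTQ2 hTW1
    have hf21 := hf Q1 W2 P2 V1 hTQ1 hTW2
    have hf22 := hf Q2 W2 P2 V2 hTQ2 hTW2
    refine quad _ _ _ _ _ _ _ _ _ _ _ _ ?_ ?_ ?_ ?_ ?_ ?_ ?_ ?_ ?_ ?_ ?_ ?_ ?_ ?_ ?_ ?_
    · exact (fibCard_exchange i hL2 hLoP1 hLoQ1 hHiW1 hHiV1 B).trans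
        (by rw [hf11])
    · exact (fibCard_exchange i hL2 hLoP1 hLoQ1 hHiW1 hHiV2 B).trans
        (by rw [hf11])
    · exact (fibCard_exchange i hL2 hLoP1 hLoQ2 hHiW1 hHiV1 B).trans
        (by rw [hf12])
    · exact (fibCard_exchange i hL2 hLoP1 hLoQ2 hHiW1 hHiV2 B).trans
        (by rw [hf12])
    · exact (fibCard_exchange i hL2 hLoP1 hLoQ1 hHiW2 hHiV1 B).trans
        (by rw [hf21])
    · exact (fibCard_exchange i hL2 hLoP1 hLoQ1 hHiW2 hHiV2 B).trans
        (by rw [hf21])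
    · exact (fibCard_exchange i hL2 hLoP1 hLoQ2 hHiW2 hHiV1 B).trans
        (by rw [hf22])
    · exact (fibCard_exchange i hL2 hLoP1 hLoQ2 hHiW2 hHiV2 B).trans
        (by rw [hf22])
    · exact (fibCard_exchange i hL2 hLoP2 hLoQ1 hHiW1 hHiV1 B).trans
        (by rw [hf11])
    · exact (fibCard_exchange i hL2 hLoP2 hLoQ1 hHiW1 hHiV2 B).trans
        (by rw [hf11])
    · exact (fibCard_exchange i hL2 hLoP2 hLoQ2 hHiW1 hHiV1 B).trans
        (by rw [hf12])
    · exact (fibCard_exchange i hL2 hLoP2 hLoQ2 hHiW1 hHiV2 B).trans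
        (by rw [hf12])
    · exact (fibCard_exchange i hL2 hLoP2 hLoQ1 hHiW2 hHiV1 B).trans
        (by rw [hf21])
    · exact (fibCard_exchange i hL2 hLoP2 hLoQ1 hHiW2 hHiV2 B).trans
        (by rw [hf21])
    · exact (fibCard_exchange i hL2 hLoP2 hLoQ2 hHiW2 hHiV1 B).trans
        (by rw [hf22])
    · exact (fibCard_exchange i hL2 hLoP2 hLoQ2 hHiW2 hHiV2 B).trans
        (by rw [hf22])
  -- sum over fibers
  have total : 2 * (dimerCount d L {P1, V1} + dimerCount d L {P1, V2} +
        dimerCount d L {P2, V1} + dimerCount d L {P2, V2}) ≤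
      (dimerCount d L {P1, W1} + dimerCount d L {P1, W2} +
        dimerCount d L {P2, W1} + dimerCount d L {P2, W2}) +
      (dimerCount d L {Q1, V1} + dimerCount d L {Q1, V2} +
        dimerCount d L {Q2, V1} + dimerCount d L {Q2, V2}) := by
    simp only [dimerCount_eq_sum i]
    have h := Finset.sum_le_sum (fun B _ => perB B) (s := Finset.univ)
    simpa only [Finset.sum_add_distrib, ← Finset.mul_sum] using h
  -- identify the twelve dimer counts
  rw [hP1e, hP2e, hQ1e, hQ2e, hW1e, hW2e, hV1e, hV2e] at total
  rw [idA i (by omega : s ≤ L - 1 - s'), idB i y hy (by omega : s ≤ L - 1 - s'),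
    idC i y hy (by omega : s ≤ L - 1 - s'), idD i y (by omega : s ≤ L - 1 - s'),
    idA i (by omega : s ≤ L - 1 - s), idB i y hy (by omega : s ≤ L - 1 - s),
    idC i y hy (by omega : s ≤ L - 1 - s), idD i y (by omega : s ≤ L - 1 - s),
    idA i (by omega : s' ≤ L - 1 - s'), idB i y hy (by omega : s' ≤ L - 1 - s'),
    idC i y hy (by omega : s' ≤ L - 1 - s'), idD i y (by omega : s' ≤ L - 1 - s')] at total
  have en : L - 1 - s' - s = L - 1 - (s + s') := by omega
  have ek1 : L - 1 - s - s = L - 1 - 2 * s := by omega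
  have ek2 : L - 1 - s' - s' = L - 1 - 2 * s' := by omega
  rw [en, ek1, ek2] at total
  unfold Hc
  omega

end Asm
section End
variable {d L : ℕ} [NeZero L] (i : Fin d) (y : TorusPt d L)

lemma Hc_step (hy : y i = 0) (hL : Even L) (hL2 : 2 ≤ L) (j : ℕ) (hj : j + 3 ≤ L / 2) :
    2 * Hc d L i y (2 * j + 3) ≤ Hc d L i y (2 * j + 1) + Hc d L i y (2 * j + 5) := by
  have hLb : 2 * (L / 2) = L := by obtain ⟨t, ht⟩ := hL; omega
  have h := convex i y hy hL hL2 (L / 2 - 1 - j) (L / 2 - 3 - j) (by omega) (by omega)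
  have e1 : L - 1 - ((L / 2 - 1 - j) + (L / 2 - 3 - j)) = 2 * j + 3 := by omega
  have e2 : L - 1 - 2 * (L / 2 - 1 - j) = 2 * j + 1 := by omega
  have e3 : L - 1 - 2 * (L / 2 - 3 - j) = 2 * j + 5 := by omega
  rwa [e1, e2, e3] at h

lemma Hc_chain (hy : y i = 0) (hL : Even L) (hL2 : 2 ≤ L) :
    ∀ k j : ℕ, 2 * (j + k) + 4 ≤ L →
      (Hc d L i y (2 * j + 3) : ℤ) - Hc d L i y (2 * j + 1) ≤
        (Hc d L i y (2 * (j + k) + 3) : ℤ) - Hc d L i y (2 * (j + k) + 1) := by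
  have hLb : 2 * (L / 2) = L := by obtain ⟨t, ht⟩ := hL; omega
  intro k
  induction k with
  | zero => intro j _; simp
  | succ k ih =>
    intro j hk
    have h1 := ih j (by omega)
    have h2 := Hc_step i y hy hL hL2 (j + k) (by omega)
    have e1 : 2 * (j + (k + 1)) + 3 = 2 * (j + k) + 5 := by ring
    have e2 : 2 * (j + (k + 1)) + 1 = 2 * (j + k) + 3 := by ring
    rw [e1, e2]
    have h2' : (2 * Hc d L i y (2 * (j + k) + 3) : ℤ) ≤
        (Hc d L i y (2 * (j + k) + 1) : ℤ) + (Hc d L i y (2 * (j + k) + 5) : ℤ) := by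
      exact_mod_cast h2
    linarith

lemma Hc_mono_step (hy : y i = 0) (hL : Even L) (hL2 : 2 ≤ L) (n : ℕ)
    (hodd : Odd n) (h3 : 3 ≤ n) (hn : 2 * n < L) :
    Hc d L i y n ≤ Hc d L i y (n - 2) := by
  have hLb : 2 * (L / 2) = L := by obtain ⟨t, ht⟩ := hL; omega
  obtain ⟨t, ht⟩ := hodd
  set j := (n - 3) / 2 with hj
  have hnj : n = 2 * j + 3 := by omega
  set j' := L / 2 - 2 - j with hj'
  have hjj' : j ≤ j' := by omega
  have hch := Hc_chain i y hy hL hL2 (j' - j) j (by omega)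
  have ej : j + (j' - j) = j' := by omega
  rw [ej] at hch
  -- symmetry: Hc (2j'+3) = Hc (2j+1), Hc (2j'+1) = Hc (2j+3)
  have s1 : Hc d L i y (2 * j + 1) = Hc d L i y (2 * j' + 3) := by
    rw [Hc_sym i y hy (2 * j + 1) (by omega)]
    congr 1
    omega
  have s2 : Hc d L i y (2 * j + 3) = Hc d L i y (2 * j' + 1) := by
    rw [Hc_sym i y hy (2 * j + 3) (by omega)]
    congr 1
    omega
  rw [← s1, ← s2] at hch
  have hfin : (Hc d L i y (2 * j + 3) : ℤ) ≤ Hc d L i y (2 * j + 1) := by linarith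
  have : Hc d L i y (2 * j + 3) ≤ Hc d L i y (2 * j + 1) := by exact_mod_cast hfin
  have e : n - 2 = 2 * j + 1 := by omega
  rw [e, hnj]
  exact this

lemma Hc_mono (hy : y i = 0) (hL : Even L) (hL2 : 2 ≤ L) :
    ∀ k m : ℕ, Odd m → 1 ≤ m → 2 * (m + 2 * k) < L →
      Hc d L i y (m + 2 * k) ≤ Hc d L i y m := by
  intro k
  induction k with
  | zero => intro m _ _ _; simp
  | succ k ih =>
    intro m hodd h1 hk
    obtain ⟨t, ht⟩ := hodd
    have hstep := Hc_mono_step i y hy hL hL2 (m + 2 * (k + 1))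
      (⟨t + k + 1, by omega⟩) (by omega) hk
    have e : m + 2 * (k + 1) - 2 = m + 2 * k := by omega
    rw [e] at hstep
    exact hstep.trans (ih m ⟨t, ht⟩ h1 (by omega))
end End
/-- **Monotonicity of the averaged monomer–monomer count along an axis (odd points).**
For `y ∈ T_L` with `y·e_i = 0` and odd integers `0 < m ≤ n < L/2`,
`|Ω^{dim}({o, y + n e_i})| + |Ω^{dim}({o, n e_i})| ≤
 |Ω^{dim}({o, y + m e_i})| + |Ω^{dim}({o, m e_i})|`. -/
theorem dimer_count_avg_nonincreasing_odd
    (d L : ℕ) [NeZero L] (hd : 2 ≤ d) (hL : Even L)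
    (i : Fin d) (y : TorusPt d L) (hy : y i = 0)
    (m n : ℕ) (hmodd : Odd m) (hnodd : Odd n)
    (hm : 0 < m) (hmn : m ≤ n) (hn : 2 * n < L) :
    dimerCount d L {torusOrigin d L, fun k : Fin d => y k + if k = i then (n : ZMod L) else 0} +
        dimerCount d L {torusOrigin d L, axisPt d L i n} ≤
      dimerCount d L {torusOrigin d L, fun k : Fin d => y k + if k = i then (m : ZMod L) else 0} +
        dimerCount d L {torusOrigin d L, axisPt d L i m} := by
  have hL2 : 2 ≤ L := by
    have h0 := NeZero.ne L
    obtain ⟨t, ht⟩ := hL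
    omega
  obtain ⟨k, hk⟩ : ∃ k, n = m + 2 * k := by
    obtain ⟨a, ha⟩ := hmodd
    obtain ⟨b, hb⟩ := hnodd
    exact ⟨b - a, by omega⟩
  have h := Hc_mono i y hy hL hL2 k m hmodd hm (by omega)
  rw [← hk] at h
  have hG : ∀ a : ℕ,
      (fun k : Fin d => y k + if k = i then (a : ZMod L) else 0) = y + axisPt d L i a := by
    intro a
    funext k
    simp [axisPt]
  rw [hG n, hG m]
  exact h
end Auto
end

section
/- Let Θ be a reflection through edges in a plane orthogonal to e_i, with associated disjoint halves T_L^+ and T_L^-. For any x ∈ T_L^+ and y ∈ T_L^-, the dimer cover counts satisfy |Ω^{dim}({x,y})| ≤ (1/2) ( |Ω^{dim}({x, Θ(x)})| + |Ω^{dim}({Θ(y), y})| ). -/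
/-- Reflection of torus sites through the plane of edges between heights `m` and `m+1`
in direction `i`:  `Θ(x)_i = 2m + 1 - x_i (mod L)`, other coordinates unchanged. -/
def reflEdge {d L : ℕ} (i : Fin d) (m : ℕ) (x : TorusPt d L) : TorusPt d L :=
  Function.update x i (2 * (m : ZMod L) + 1 - x i)

/-- Membership in the half-torus
`T_L^+ = {x : x_i - (m+1) (mod L) ∈ {0,…,L/2 - 1}}` for the edge reflection. -/
def inPlusEdge {d L : ℕ} (i : Fin d) (m : ℕ) (x : TorusPt d L) : Prop :=
  (x i - (m : ZMod L) - 1).val < L / 2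

set_option linter.unusedSectionVars false

section Geom
variable {d L : ℕ} [NeZero L] {i : Fin d} {m : ℕ}

lemma natCast_val_self (a : ZMod L) : ((a.val : ℕ) : ZMod L) = a := by
  rw [ZMod.natCast_val, ZMod.cast_id]

lemma two_le_L (hL : Even L) : 2 ≤ L := by
  rcases hL with ⟨k, hk⟩; have := (NeZero.ne L); omega

lemma reflEdge_apply_i (v : TorusPt d L) : reflEdge i m v i = 2 * (m : ZMod L) + 1 - v i := by
  simp [reflEdge]

lemma reflEdge_apply_ne (v : TorusPt d L) {k : Fin d} (hk : k ≠ i) : reflEdge i m v k = v k := by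
  simp [reflEdge, Function.update_of_ne hk]

lemma reflEdge_invol (v : TorusPt d L) : reflEdge i m (reflEdge i m v) = v := by
  funext k
  by_cases hk : k = i
  · subst hk; rw [reflEdge_apply_i, reflEdge_apply_i]; ring
  · rw [reflEdge_apply_ne _ hk, reflEdge_apply_ne _ hk]

lemma reflEdge_ne_self (hL : Even L) (v : TorusPt d L) : reflEdge i m v ≠ v := by
  intro h
  have h1 : 2 * (m : ZMod L) + 1 - v i = v i := by
    conv_rhs => rw [← h]
    rw [reflEdge_apply_i]
  have h2 : 2 * (m : ZMod L) + 1 = 2 * v i := by linear_combination h1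
  have hdvd : (2 : ℕ) ∣ L := hL.two_dvd
  have := congrArg (ZMod.castHom hdvd (ZMod 2)) h2
  simp only [map_add, map_mul, map_one, map_ofNat, map_natCast] at this
  have h0 : (2 : ZMod 2) = 0 := rfl
  rw [h0] at this
  simp at this

lemma val_neg_sub_one (a : ZMod L) : (-a - 1).val = L - 1 - a.val := by
  have hn : a.val < L := ZMod.val_lt a
  have hL1 : 1 ≤ L := Nat.one_le_iff_ne_zero.mpr (NeZero.ne L)
  have key : (-a - 1) = ((L - 1 - a.val : ℕ) : ZMod L) := by
    have hsum : (L - 1 - a.val) + (a.val + 1) = L := by omega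
    have h : ((L - 1 - a.val : ℕ) : ZMod L) + ((a.val + 1 : ℕ) : ZMod L) = ((L : ℕ) : ZMod L) := by
      rw [← Nat.cast_add, hsum]
    rw [ZMod.natCast_self] at h
    push_cast at h
    rw [natCast_val_self] at h
    linear_combination -h
  rw [key, ZMod.val_cast_of_lt (by omega)]

lemma inPlus_reflEdge (hL : Even L) (v : TorusPt d L) :
    inPlusEdge i m (reflEdge i m v) ↔ ¬ inPlusEdge i m v := by
  unfold inPlusEdge
  rw [reflEdge_apply_i]
  have h1 : 2 * (m : ZMod L) + 1 - v i - (m : ZMod L) - 1 = -(v i - (m : ZMod L) - 1) - 1 := by ring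
  rw [h1, val_neg_sub_one]
  have hn : (v i - (m : ZMod L) - 1).val < L := ZMod.val_lt _
  rcases hL with ⟨k, hk⟩
  subst hk
  omega

lemma inPlusEdge_coord {v w : TorusPt d L} (h : v i = w i) :
    inPlusEdge i m v ↔ inPlusEdge i m w := by unfold inPlusEdge; rw [h]

lemma step_up (hL : Even L) (a : ZMod L) (ha : a.val < L / 2) (hb : ¬ (a + 1).val < L / 2) :
    2 * a + 2 = 0 := by
  obtain ⟨k, hk⟩ := hL
  have hL2 : 2 ≤ L := two_le_L ⟨k, hk⟩
  haveI : Fact (1 < L) := ⟨by omega⟩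
  have h1 : (a + 1).val = a.val + 1 := by
    rw [ZMod.val_add, ZMod.val_one]
    exact Nat.mod_eq_of_lt (by omega)
  have h2 : a.val + 1 = L / 2 := by omega
  have h3 : ((2 * (a.val + 1) : ℕ) : ZMod L) = 0 := by
    rw [show 2 * (a.val + 1) = L by omega, ZMod.natCast_self]
  push_cast at h3
  rw [natCast_val_self] at h3
  linear_combination h3

lemma step_down (hL : Even L) (a : ZMod L) (ha : a.val < L / 2) (hb : ¬ (a - 1).val < L / 2) :
    a = 0 := by
  have hL2 : 2 ≤ L := two_le_L hL
  haveI : Fact (1 < L) := ⟨by omega⟩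
  by_contra hne
  have hpos : 0 < a.val := by
    rcases Nat.eq_zero_or_pos a.val with h0 | h1
    · exact absurd (ZMod.val_eq_zero a |>.mp h0) hne
    · exact h1
  have h1v : (1 : ZMod L).val = 1 := ZMod.val_one L
  have hle : (1 : ZMod L).val ≤ a.val := by rw [h1v]; omega
  have h1 := ZMod.val_sub hle
  rw [h1v] at h1
  omega

lemma cross_eq_refl (hL : Even L) {v w : TorusPt d L} (hadj : torusAdj v w)
    (hv : inPlusEdge i m v) (hw : ¬ inPlusEdge i m w) : w = reflEdge i m v := by
  obtain ⟨j, hj⟩ := hadj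
  by_cases hji : j = i
  · subst hji
    rcases hj with hj | hj
    · have hwj : w j = v j + 1 := by rw [hj]; simp
      have hb : ¬ ((v j - (m : ZMod L) - 1) + 1).val < L / 2 := by
        unfold inPlusEdge at hw
        rw [hwj] at hw
        convert hw using 3
        ring
      have := step_up hL _ hv hb
      have hkey : v j + 1 = 2 * (m : ZMod L) + 1 - v j := by linear_combination this
      rw [hj]
      unfold reflEdge
      rw [← hkey]
    · have hwj : w j = v j - 1 := by rw [hj]; simp
      have hb : ¬ ((v j - (m : ZMod L) - 1) - 1).val < L / 2 := by
        unfold inPlusEdge at hw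
        rw [hwj] at hw
        convert hw using 3
        ring
      have h0 := step_down hL _ hv hb
      have hkey : v j - 1 = 2 * (m : ZMod L) + 1 - v j := by linear_combination 2 * h0
      rw [hj]
      unfold reflEdge
      rw [← hkey]
  · exfalso
    have heq : w i = v i := by
      rcases hj with hj | hj <;> rw [hj] <;>
        exact Function.update_of_ne (fun h => hji h.symm) _ _
    exact hw ((inPlusEdge_coord heq).mpr hv)

lemma torusAdj_symm {v w : TorusPt d L} (h : torusAdj v w) : torusAdj w v := by
  obtain ⟨j, hj⟩ := h
  refine ⟨j, ?_⟩
  rcases hj with hj | hj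
  · right; subst hj; funext k
    by_cases hk : k = j
    · subst hk; simp
    · simp [Function.update_of_ne hk]
  · left; subst hj; funext k
    by_cases hk : k = j
    · subst hk; simp
    · simp [Function.update_of_ne hk]

lemma reflEdge_update_eq (v : TorusPt d L) (c : ZMod L) :
    reflEdge i m (Function.update v i c) = Function.update v i (2 * (m : ZMod L) + 1 - c) := by
  unfold reflEdge
  rw [Function.update_self, Function.update_idem]

lemma reflEdge_update_ne (v : TorusPt d L) (c : ZMod L) {j : Fin d} (hj : j ≠ i) :
    reflEdge i m (Function.update v j c) = Function.update (reflEdge i m v) j c := by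
  unfold reflEdge
  rw [Function.update_of_ne hj.symm _ _, Function.update_comm hj]

lemma reflEdge_eq_update (v : TorusPt d L) (c : ZMod L) :
    Function.update (reflEdge i m v) i c = Function.update v i c := by
  unfold reflEdge
  rw [Function.update_idem]

lemma torusAdj_refl_map {v w : TorusPt d L} (h : torusAdj v w) :
    torusAdj (reflEdge i m v) (reflEdge i m w) := by
  obtain ⟨j, hj⟩ := h
  by_cases hji : j = i
  · subst hji
    refine ⟨j, ?_⟩
    rcases hj with hj | hj
    · right
      rw [hj, reflEdge_update_eq, reflEdge_apply_i, reflEdge_eq_update]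
      exact congrArg (Function.update v j) (by ring)
    · left
      rw [hj, reflEdge_update_eq, reflEdge_apply_i, reflEdge_eq_update]
      exact congrArg (Function.update v j) (by ring)
  · refine ⟨j, ?_⟩
    rcases hj with hj | hj
    · left
      rw [hj, reflEdge_update_ne _ _ hji, reflEdge_apply_ne _ hji]
    · right
      rw [hj, reflEdge_update_ne _ _ hji, reflEdge_apply_ne _ hji]

end Geom
section Comb
variable {d L : ℕ} [NeZero L] {i : Fin d} {m : ℕ}

def IsCover {d L : ℕ} (A : Finset (TorusPt d L)) (f : TorusPt d L → TorusPt d L) : Prop :=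
  (∀ x ∈ A, f x = x) ∧ ∀ x, x ∉ A → f x ∉ A ∧ f x ≠ x ∧ torusAdj x (f x) ∧ f (f x) = x

instance {d L : ℕ} (i : Fin d) (m : ℕ) (v : TorusPt d L) : Decidable (inPlusEdge i m v) :=
  Nat.decLt _ _

def crossB {d L : ℕ} (i : Fin d) (m : ℕ) (f : TorusPt d L → TorusPt d L) :
    TorusPt d L → Bool := fun v => decide (f v = reflEdge i m v)

def foldP {d L : ℕ} (i : Fin d) (m : ℕ) (f : TorusPt d L → TorusPt d L) :
    TorusPt d L → TorusPt d L := fun v =>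
  if inPlusEdge i m v then f v else reflEdge i m (f (reflEdge i m v))

def foldM {d L : ℕ} (i : Fin d) (m : ℕ) (f : TorusPt d L → TorusPt d L) :
    TorusPt d L → TorusPt d L := fun v =>
  if inPlusEdge i m v then reflEdge i m (f (reflEdge i m v)) else f v

def conjR {d L : ℕ} (i : Fin d) (m : ℕ) (f : TorusPt d L → TorusPt d L) :
    TorusPt d L → TorusPt d L := fun v => reflEdge i m (f (reflEdge i m v))

def glueF {d L : ℕ} (i : Fin d) (m : ℕ) (g h : TorusPt d L → TorusPt d L) :
    TorusPt d L → TorusPt d L := fun v => if inPlusEdge i m v then g v else h v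

lemma mem_pair {v a b : TorusPt d L} : v ∈ ({a, b} : Finset (TorusPt d L)) ↔ v = a ∨ v = b := by
  simp

lemma reflEdge_inj {v w : TorusPt d L} (h : reflEdge i m v = reflEdge i m w) : v = w := by
  have := congrArg (reflEdge i m) h
  rwa [reflEdge_invol, reflEdge_invol] at this

lemma foldM_eq_foldP_conj (f : TorusPt d L → TorusPt d L) :
    foldM i m f = foldP i m (conjR i m f) := by
  funext v
  unfold foldM foldP conjR
  by_cases hv : inPlusEdge i m v
  · rw [if_pos hv, if_pos hv]
  · rw [if_neg hv, if_neg hv, reflEdge_invol, reflEdge_invol]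

lemma conjR_isCover (hL : Even L) {a b : TorusPt d L} {f : TorusPt d L → TorusPt d L}
    (hf : IsCover {a, b} f) : IsCover {reflEdge i m a, reflEdge i m b} (conjR i m f) := by
  constructor
  · intro v hv
    rcases mem_pair.mp hv with rfl | rfl <;>
      simp only [conjR, reflEdge_invol] <;>
      rw [hf.1 _ (by simp)]
  · intro v hv
    rw [mem_pair] at hv
    push_neg at hv
    have hΘv : reflEdge i m v ∉ ({a, b} : Finset (TorusPt d L)) := by
      rw [mem_pair]
      push_neg
      constructor
      · intro h; exact hv.1 (by rw [← h, reflEdge_invol])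
      · intro h; exact hv.2 (by rw [← h, reflEdge_invol])
    obtain ⟨h1, h2, h3, h4⟩ := hf.2 _ hΘv
    refine ⟨?_, ?_, ?_, ?_⟩
    · rw [mem_pair]; push_neg
      rw [mem_pair] at h1; push_neg at h1
      exact ⟨fun h => h1.1 (reflEdge_inj h), fun h => h1.2 (reflEdge_inj h)⟩
    · intro h
      apply h2
      have := congrArg (reflEdge i m) h
      unfold conjR at this
      rwa [reflEdge_invol] at this
    · have h5 := torusAdj_refl_map (i := i) (m := m) h3
      rw [reflEdge_invol] at h5
      exact h5
    · unfold conjR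
      rw [reflEdge_invol, h4, reflEdge_invol]

lemma foldP_symm (f : TorusPt d L → TorusPt d L) (hL : Even L) (v : TorusPt d L) :
    foldP i m f (reflEdge i m v) = reflEdge i m (foldP i m f v) := by
  unfold foldP
  by_cases hv : inPlusEdge i m v
  · rw [if_neg (by rw [inPlus_reflEdge hL]; exact fun h => h hv), if_pos hv, reflEdge_invol]
  · rw [if_pos (by rw [inPlus_reflEdge hL] at *; tauto), if_neg hv, reflEdge_invol]

/-- if `f v = Θ v` then `f (Θ v) = v`, for covers. -/
lemma cross_flip (hL : Even L) {a b : TorusPt d L} {f : TorusPt d L → TorusPt d L}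
    (hf : IsCover {a, b} f) {v : TorusPt d L} (h : f v = reflEdge i m v) :
    f (reflEdge i m v) = v := by
  by_cases hv : v ∈ ({a, b} : Finset (TorusPt d L))
  · exfalso
    rw [hf.1 _ hv] at h
    exact reflEdge_ne_self hL v h.symm
  · obtain ⟨h1, h2, h3, h4⟩ := hf.2 _ hv
    rw [← h, h4]

lemma cross_symm_iff (hL : Even L) {a b : TorusPt d L} {f : TorusPt d L → TorusPt d L}
    (hf : IsCover {a, b} f) (v : TorusPt d L) :
    f (reflEdge i m v) = reflEdge i m (reflEdge i m v) ↔ f v = reflEdge i m v := by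
  rw [reflEdge_invol]
  constructor
  · intro h
    have := cross_flip hL hf (v := reflEdge i m v) (by rw [h, reflEdge_invol])
    rwa [reflEdge_invol] at this
  · intro h
    exact cross_flip hL hf h

lemma crossB_foldP (hL : Even L) {a b : TorusPt d L} {f : TorusPt d L → TorusPt d L}
    (hf : IsCover {a, b} f) : crossB i m (foldP i m f) = crossB i m f := by
  funext v
  unfold crossB foldP
  rw [decide_eq_decide]
  by_cases hv : inPlusEdge i m v
  · rw [if_pos hv]
  · rw [if_neg hv]
    constructor
    · intro h
      have h' : f (reflEdge i m v) = reflEdge i m v |> (fun _ => True) := trivial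
      have h2 : f (reflEdge i m v) = reflEdge i m (reflEdge i m v) := by
        have := congrArg (reflEdge i m) h
        rwa [reflEdge_invol] at this
      exact (cross_symm_iff hL hf v).mp h2
    · intro h
      have h2 : f (reflEdge i m v) = reflEdge i m (reflEdge i m v) :=
        (cross_symm_iff hL hf v).mpr h
      rw [h2, reflEdge_invol]

lemma crossB_conjR (hL : Even L) {a b : TorusPt d L} {f : TorusPt d L → TorusPt d L}
    (hf : IsCover {a, b} f) : crossB i m (conjR i m f) = crossB i m f := by
  funext v
  unfold crossB conjR
  rw [decide_eq_decide]
  constructor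
  · intro h
    have h2 : f (reflEdge i m v) = reflEdge i m (reflEdge i m v) := by
      have h3 := congrArg (reflEdge i m) h
      rwa [reflEdge_invol (f (reflEdge i m v))] at h3
    exact (cross_symm_iff hL hf v).mp h2
  · intro h
    have h2 : f (reflEdge i m v) = reflEdge i m (reflEdge i m v) :=
      (cross_symm_iff hL hf v).mpr h
    have h3 := congrArg (reflEdge i m) h2
    rw [reflEdge_invol] at h3
    exact h3

lemma foldP_isCover (hL : Even L) {x y : TorusPt d L}
    (hx : inPlusEdge i m x) (hy : ¬ inPlusEdge i m y) {f : TorusPt d L → TorusPt d L}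
    (hf : IsCover {x, y} f) : IsCover {x, reflEdge i m x} (foldP i m f) := by
  have hmemxy : ∀ v : TorusPt d L, v ≠ x → v ≠ y → v ∉ ({x, y} : Finset (TorusPt d L)) := by
    intro v h1 h2; rw [mem_pair]; tauto
  have hPΘ : ∀ v : TorusPt d L, inPlusEdge i m (reflEdge i m v) ↔ ¬ inPlusEdge i m v :=
    fun v => inPlus_reflEdge hL v
  constructor
  · intro v hv
    rcases mem_pair.mp hv with rfl | rfl
    · unfold foldP
      rw [if_pos hx, hf.1 _ (by simp)]
    · unfold foldP
      rw [if_neg (by rw [hPΘ]; exact fun h => h hx), reflEdge_invol, hf.1 _ (by simp)]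
  · intro v hv
    rw [mem_pair] at hv
    push_neg at hv
    obtain ⟨hvx, hvΘx⟩ := hv
    by_cases hPv : inPlusEdge i m v
    · -- v in plus half
      have hvy : v ≠ y := fun h => hy (h ▸ hPv)
      obtain ⟨h1, h2, h3, h4⟩ := hf.2 v (hmemxy v hvx hvy)
      rw [mem_pair] at h1; push_neg at h1
      have hfv : foldP i m f v = f v := if_pos hPv
      by_cases hPfv : inPlusEdge i m (f v)
      · refine ⟨?_, ?_, ?_, ?_⟩
        · rw [hfv, mem_pair]; push_neg
          refine ⟨h1.1, fun h => ?_⟩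
          rw [h, hPΘ] at hPfv
          exact hPfv hx
        · rw [hfv]; exact h2
        · rw [hfv]; exact h3
        · rw [hfv]
          unfold foldP
          rw [if_pos hPfv, h4]
      · -- crossing
        have hcross : f v = reflEdge i m v := cross_eq_refl hL h3 hPv hPfv
        refine ⟨?_, ?_, ?_, ?_⟩
        · rw [hfv, hcross, mem_pair]; push_neg
          constructor
          · intro h
            exact hvΘx (by rw [← h, reflEdge_invol])
          · intro h
            exact hvx (reflEdge_inj h)
        · rw [hfv, hcross]
          exact reflEdge_ne_self hL v
        · rw [hfv]; exact h3
        · rw [hfv, hcross]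
          unfold foldP
          rw [if_neg (by rw [hPΘ]; exact fun h => h hPv), reflEdge_invol, hcross, reflEdge_invol]
    · -- v in minus half
      set u := reflEdge i m v with hu
      have hΘu : reflEdge i m u = v := reflEdge_invol v
      have hux : u ≠ x := fun h => hvΘx (by rw [← hΘu, h])
      have huy : u ≠ y := fun h => hy (h ▸ ((hPΘ v).mpr hPv))
      obtain ⟨h1, h2, h3, h4⟩ := hf.2 u (hmemxy u hux huy)
      rw [mem_pair] at h1; push_neg at h1
      have hfv : foldP i m f v = reflEdge i m (f u) := if_neg hPv
      by_cases hPfu : inPlusEdge i m (f u)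
      · refine ⟨?_, ?_, ?_, ?_⟩
        · rw [hfv, mem_pair]; push_neg
          constructor
          · intro h
            rw [← h] at hx
            exact (hPΘ (f u)).mp hx hPfu
          · intro h; exact h1.1 (reflEdge_inj h)
        · rw [hfv]
          intro h
          rw [← hΘu] at h
          exact h2 (reflEdge_inj h)
        · rw [hfv, ← hΘu]
          exact torusAdj_refl_map h3
        · rw [hfv]
          unfold foldP
          rw [if_neg (by rw [hPΘ]; exact fun h => h hPfu), reflEdge_invol, h4, hΘu]
      · -- crossing at u : f u = Θ u = v
        have hcross : f u = reflEdge i m u := cross_eq_refl hL h3 ((hPΘ v).mpr hPv) hPfu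
        rw [hΘu] at hcross
        refine ⟨?_, ?_, ?_, ?_⟩
        · rw [hfv, hcross, mem_pair]; push_neg
          exact ⟨hux, fun h => (hPΘ x).mp (h ▸ ((hPΘ v).mpr hPv)) hx⟩
        · rw [hfv, hcross]
          exact fun h => hPv (h ▸ ((hPΘ v).mpr hPv))
        · rw [hfv, hcross]
          rw [hcross] at h3
          exact torusAdj_symm h3
        · rw [hfv, hcross]
          unfold foldP
          rw [if_pos ((hPΘ v).mpr hPv)]
          exact hcross

lemma glue_isCover (hL : Even L) {x y : TorusPt d L}
    (hx : inPlusEdge i m x) (hy : ¬ inPlusEdge i m y) {g h : TorusPt d L → TorusPt d L}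
    (hg : IsCover {x, reflEdge i m x} g)
    (hgs : ∀ v, g (reflEdge i m v) = reflEdge i m (g v))
    (hh' : IsCover {reflEdge i m y, reflEdge i m (reflEdge i m y)} h)
    (hhs : ∀ v, h (reflEdge i m v) = reflEdge i m (h v))
    (hc : ∀ v, g v = reflEdge i m v ↔ h v = reflEdge i m v) :
    IsCover {x, y} (glueF i m g h) := by
  have hh : IsCover {reflEdge i m y, y} h := by rwa [reflEdge_invol] at hh'
  have hPΘ : ∀ v : TorusPt d L, inPlusEdge i m (reflEdge i m v) ↔ ¬ inPlusEdge i m v :=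
    fun v => inPlus_reflEdge hL v
  constructor
  · intro v hv
    rcases mem_pair.mp hv with rfl | rfl
    · unfold glueF; rw [if_pos hx, hg.1 _ (by simp)]
    · unfold glueF; rw [if_neg hy, hh.1 _ (by simp)]
  · intro v hv
    rw [mem_pair] at hv
    push_neg at hv
    obtain ⟨hvx, hvy⟩ := hv
    by_cases hPv : inPlusEdge i m v
    · -- plus side: use g
      have hvmem : v ∉ ({x, reflEdge i m x} : Finset (TorusPt d L)) := by
        rw [mem_pair]; push_neg
        exact ⟨hvx, fun h' => (hPΘ x).mp (h' ▸ hPv) hx⟩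
      obtain ⟨h1, h2, h3, h4⟩ := hg.2 v hvmem
      rw [mem_pair] at h1; push_neg at h1
      have hfv : glueF i m g h v = g v := if_pos hPv
      have hgvy : g v ≠ y := by
        intro hgy
        have hPgv : ¬ inPlusEdge i m (g v) := hgy ▸ hy
        have hcr : g v = reflEdge i m v := cross_eq_refl hL h3 hPv hPgv
        have hvΘy : v = reflEdge i m y := by rw [← hgy, hcr, reflEdge_invol]
        have hfix : h v = v := by rw [hvΘy]; exact hh.1 _ (by simp)
        have hhv : h v = reflEdge i m v := (hc v).mp hcr
        rw [hfix] at hhv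
        exact reflEdge_ne_self hL v hhv.symm
      refine ⟨?_, ?_, ?_, ?_⟩
      · rw [hfv, mem_pair]; push_neg; exact ⟨h1.1, hgvy⟩
      · rw [hfv]; exact h2
      · rw [hfv]; exact h3
      · rw [hfv]
        by_cases hPgv : inPlusEdge i m (g v)
        · unfold glueF; rw [if_pos hPgv, h4]
        · have hcr : g v = reflEdge i m v := cross_eq_refl hL h3 hPv hPgv
          have hhv : h v = reflEdge i m v := (hc v).mp hcr
          have hvmemh : v ∉ ({reflEdge i m y, y} : Finset (TorusPt d L)) := by
            rw [mem_pair]; push_neg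
            refine ⟨fun h' => ?_, fun h' => hy (h' ▸ hPv)⟩
            have hfix : h v = v := by rw [h']; exact hh.1 _ (by simp)
            rw [hfix] at hhv
            exact reflEdge_ne_self hL v hhv.symm
          obtain ⟨g1, g2, g3, g4⟩ := hh.2 v hvmemh
          rw [hcr]
          unfold glueF
          rw [if_neg (fun hcc => (hPΘ v).mp hcc hPv), ← hhv, g4]
    · -- minus side: use h
      have hvmem : v ∉ ({reflEdge i m y, y} : Finset (TorusPt d L)) := by
        rw [mem_pair]; push_neg
        exact ⟨fun h' => hPv (h' ▸ ((hPΘ y).mpr hy)), hvy⟩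
      obtain ⟨h1, h2, h3, h4⟩ := hh.2 v hvmem
      rw [mem_pair] at h1; push_neg at h1
      have hfv : glueF i m g h v = h v := if_neg hPv
      have hhvx : h v ≠ x := by
        intro hhx
        have hPhv : inPlusEdge i m (h v) := hhx ▸ hx
        have hcr : h v = reflEdge i m v := by
          have h3' := torusAdj_symm h3
          have h6 := cross_eq_refl hL h3' hPhv hPv
          have h5 := congrArg (reflEdge i m) h6
          rw [reflEdge_invol] at h5
          exact h5.symm
        have hgv : g v = reflEdge i m v := (hc v).mpr hcr
        have hvΘx : v = reflEdge i m x := by rw [← hhx, hcr, reflEdge_invol]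
        have hfix : g v = v := by rw [hvΘx]; exact hg.1 _ (by simp)
        rw [hfix] at hgv
        exact reflEdge_ne_self hL v hgv.symm
      refine ⟨?_, ?_, ?_, ?_⟩
      · rw [hfv, mem_pair]; push_neg; exact ⟨hhvx, h1.2⟩
      · rw [hfv]; exact h2
      · rw [hfv]; exact h3
      · rw [hfv]
        by_cases hPhv : inPlusEdge i m (h v)
        · have hcr : h v = reflEdge i m v := by
            have h3' := torusAdj_symm h3
            have h6 := cross_eq_refl hL h3' hPhv hPv
            have h5 := congrArg (reflEdge i m) h6
            rw [reflEdge_invol] at h5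
            exact h5.symm
          have hgv : g v = reflEdge i m v := (hc v).mpr hcr
          have hvmemg : v ∉ ({x, reflEdge i m x} : Finset (TorusPt d L)) := by
            rw [mem_pair]; push_neg
            refine ⟨fun h' => hPv (h' ▸ hx), fun h' => ?_⟩
            have hfix : g v = v := by rw [h']; exact hg.1 _ (by simp)
            rw [hfix] at hgv
            exact reflEdge_ne_self hL v hgv.symm
          obtain ⟨g1, g2, g3, g4⟩ := hg.2 v hvmemg
          rw [hcr]
          unfold glueF
          rw [if_pos ((hPΘ v).mpr hPv), ← hgv, g4]
        · unfold glueF; rw [if_neg hPhv, h4]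

lemma foldM_isCover (hL : Even L) {x y : TorusPt d L}
    (hx : inPlusEdge i m x) (hy : ¬ inPlusEdge i m y) {f : TorusPt d L → TorusPt d L}
    (hf : IsCover {x, y} f) :
    IsCover {reflEdge i m y, reflEdge i m (reflEdge i m y)} (foldM i m f) := by
  rw [foldM_eq_foldP_conj]
  have hc : IsCover {reflEdge i m x, reflEdge i m y} (conjR i m f) := conjR_isCover hL hf
  rw [Finset.pair_comm] at hc
  exact foldP_isCover hL ((inPlus_reflEdge hL y).mpr hy)
    (fun hcc => (inPlus_reflEdge hL x).mp hcc hx) hc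

lemma foldM_symm (hL : Even L) (f : TorusPt d L → TorusPt d L) (v : TorusPt d L) :
    foldM i m f (reflEdge i m v) = reflEdge i m (foldM i m f v) := by
  rw [foldM_eq_foldP_conj]
  exact foldP_symm _ hL v

lemma crossB_foldM (hL : Even L) {a b : TorusPt d L} {f : TorusPt d L → TorusPt d L}
    (hf : IsCover {a, b} f) : crossB i m (foldM i m f) = crossB i m f := by
  rw [foldM_eq_foldP_conj]
  have hc : IsCover {reflEdge i m a, reflEdge i m b} (conjR i m f) := conjR_isCover hL hf
  rw [crossB_foldP hL hc, crossB_conjR hL hf]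

lemma glue_fold (f : TorusPt d L → TorusPt d L) :
    glueF i m (foldP i m f) (foldM i m f) = f := by
  funext v
  unfold glueF foldP foldM
  by_cases hv : inPlusEdge i m v
  · rw [if_pos hv, if_pos hv]
  · rw [if_neg hv, if_neg hv]

lemma foldP_glue (hL : Even L) {g h : TorusPt d L → TorusPt d L}
    (hgs : ∀ v, g (reflEdge i m v) = reflEdge i m (g v)) :
    foldP i m (glueF i m g h) = g := by
  funext v
  unfold foldP glueF
  by_cases hv : inPlusEdge i m v
  · rw [if_pos hv, if_pos hv]
  · rw [if_neg hv, if_pos ((inPlus_reflEdge hL v).mpr hv), hgs, reflEdge_invol]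

lemma foldM_glue (hL : Even L) {g h : TorusPt d L → TorusPt d L}
    (hhs : ∀ v, h (reflEdge i m v) = reflEdge i m (h v)) :
    foldM i m (glueF i m g h) = h := by
  funext v
  unfold foldM glueF
  by_cases hv : inPlusEdge i m v
  · rw [if_pos hv, if_neg (fun hcc => (inPlus_reflEdge hL v).mp hcc hv), hhs, reflEdge_invol]
  · rw [if_neg hv, if_neg hv]

def SymSub (d L : ℕ) (i : Fin d) (m : ℕ) (z : TorusPt d L) :=
  {f : TorusPt d L → TorusPt d L // IsCover {z, reflEdge i m z} f ∧
    ∀ v, f (reflEdge i m v) = reflEdge i m (f v)}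

def mainEquiv (hL : Even L) (x y : TorusPt d L)
    (hx : inPlusEdge i m x) (hy : ¬ inPlusEdge i m y) :
    {f : TorusPt d L → TorusPt d L // IsCover {x, y} f} ≃
      {p : SymSub d L i m x × SymSub d L i m (reflEdge i m y) //
        crossB i m p.1.1 = crossB i m p.2.1} where
  toFun f := ⟨(⟨foldP i m f.1, foldP_isCover hL hx hy f.2, fun v => foldP_symm _ hL v⟩,
               ⟨foldM i m f.1, foldM_isCover hL hx hy f.2, fun v => foldM_symm hL _ v⟩),
              by rw [crossB_foldP hL f.2, crossB_foldM hL f.2]⟩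
  invFun p := ⟨glueF i m p.1.1.1 p.1.2.1, by
    refine glue_isCover hL hx hy p.1.1.2.1 p.1.1.2.2 p.1.2.2.1 p.1.2.2.2 ?_
    · intro v
      have hcf := congrFun p.2 v
      unfold crossB at hcf
      rwa [decide_eq_decide] at hcf⟩
  left_inv f := Subtype.ext (glue_fold f.1)
  right_inv p := by
    apply Subtype.ext
    apply Prod.ext
    · exact Subtype.ext (foldP_glue hL p.1.1.2.2)
    · exact Subtype.ext (foldM_glue hL p.1.2.2.2)

def pairEquiv {α β γ : Type*} (F : α → γ) (G : β → γ) :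
    {p : α × β // F p.1 = G p.2} ≃ Σ k : γ, {a // F a = k} × {b // G b = k} where
  toFun p := ⟨F p.1.1, ⟨p.1.1, rfl⟩, ⟨p.1.2, p.2.symm⟩⟩
  invFun q := ⟨(q.2.1.1, q.2.2.1), by rw [q.2.1.2, q.2.2.2]⟩
  left_inv p := rfl
  right_inv q := by
    obtain ⟨k, ⟨a, ha⟩, ⟨b, hb⟩⟩ := q
    subst ha
    rfl

lemma card_sigma' {γ : Type*} [Fintype γ] (f : γ → Type*) [∀ k, Finite (f k)] :
    Nat.card (Σ k, f k) = ∑ k : γ, Nat.card (f k) := by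
  classical
  have : ∀ k, Fintype (f k) := fun k => Fintype.ofFinite _
  simp only [Nat.card_eq_fintype_card, Fintype.card_sigma]

lemma card_pairs_eq {α β γ : Type*} [Finite α] [Finite β] [Fintype γ]
    (F : α → γ) (G : β → γ) :
    Nat.card {p : α × β // F p.1 = G p.2} =
      ∑ k : γ, Nat.card {a // F a = k} * Nat.card {b // G b = k} := by
  rw [Nat.card_congr (pairEquiv F G), card_sigma']
  congr 1
  funext k
  rw [Nat.card_prod]

lemma sum_pairs_le {α β γ : Type*} [Finite α] [Finite β] [Fintype γ]
    (F : α → γ) (G : β → γ) :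
    2 * Nat.card {p : α × β // F p.1 = G p.2} ≤
      Nat.card {p : α × α // F p.1 = F p.2} + Nat.card {p : β × β // G p.1 = G p.2} := by
  classical
  rw [card_pairs_eq F G, card_pairs_eq F F, card_pairs_eq G G, Finset.mul_sum,
    ← Finset.sum_add_distrib]
  apply Finset.sum_le_sum
  intro k _
  set a := Nat.card {a // F a = k}
  set b := Nat.card {b // G b = k}
  zify
  nlinarith [sq_nonneg ((a : ℤ) - (b : ℤ))]

end Comb

instance {d L : ℕ} [NeZero L] (i : Fin d) (m : ℕ) (z : TorusPt d L) :
    Finite (SymSub d L i m z) := by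
  unfold SymSub
  infer_instance

theorem dimer_count_edge_reflection_inequality'
    (d L : ℕ) [NeZero L] (hd : 2 ≤ d) (hL : Even L)
    (i : Fin d) (m : ℕ) (hm : m < L)
    (x y : TorusPt d L) (hx : inPlusEdge i m x) (hy : ¬ inPlusEdge i m y) :
    2 * Nat.card {f : TorusPt d L → TorusPt d L // IsCover {x, y} f} ≤
      Nat.card {f : TorusPt d L → TorusPt d L // IsCover {x, reflEdge i m x} f} +
      Nat.card {f : TorusPt d L → TorusPt d L // IsCover {reflEdge i m y, y} f} := by
  classical
  have hyΘ : ¬ inPlusEdge i m (reflEdge i m x) := fun hc => (inPlus_reflEdge hL x).mp hc hx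
  have hxΘ : inPlusEdge i m (reflEdge i m y) := (inPlus_reflEdge hL y).mpr hy
  have c1 : Nat.card {f : TorusPt d L → TorusPt d L // IsCover {x, y} f} =
      Nat.card {p : SymSub d L i m x × SymSub d L i m (reflEdge i m y) //
        crossB i m p.1.1 = crossB i m p.2.1} := Nat.card_congr (mainEquiv hL x y hx hy)
  have c2 : Nat.card {f : TorusPt d L → TorusPt d L // IsCover {x, reflEdge i m x} f} =
      Nat.card {p : SymSub d L i m x × SymSub d L i m (reflEdge i m (reflEdge i m x)) //
        crossB i m p.1.1 = crossB i m p.2.1} := Nat.card_congr (mainEquiv hL x _ hx hyΘ)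
  rw [reflEdge_invol] at c2
  have c3 : Nat.card {f : TorusPt d L → TorusPt d L // IsCover {reflEdge i m y, y} f} =
      Nat.card {p : SymSub d L i m (reflEdge i m y) × SymSub d L i m (reflEdge i m y) //
        crossB i m p.1.1 = crossB i m p.2.1} := Nat.card_congr (mainEquiv hL _ y hxΘ hy)
  rw [c1, c2, c3]
  exact sum_pairs_le (fun g : SymSub d L i m x => crossB i m g.1)
    (fun g : SymSub d L i m (reflEdge i m y) => crossB i m g.1)

/-- **Two-site reflection-positivity inequality for dimer covers (edge reflection).**
For `x ∈ T_L^+` and `y ∈ T_L^- = T_L ∖ T_L^+`,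
`2|Ω^{dim}({x,y})| ≤ |Ω^{dim}({x,Θx})| + |Ω^{dim}({Θy,y})|`. -/
theorem dimer_count_edge_reflection_inequality
    (d L : ℕ) [NeZero L] (hd : 2 ≤ d) (hL : Even L)
    (i : Fin d) (m : ℕ) (hm : m < L)
    (x y : TorusPt d L) (hx : inPlusEdge i m x) (hy : ¬ inPlusEdge i m y) :
    2 * dimerCount d L {x, y} ≤
      dimerCount d L {x, reflEdge i m x} + dimerCount d L {reflEdge i m y, y} := by
  exact dimer_count_edge_reflection_inequality' d L hd hL i m hm x y hx hy
end

section
/- For random lattice permutations on the torus with parameter α ∈ ℝ: for every z = (z_1,…,z_d) ∈ T_L and i ∈ {1,…,d} with z_i odd, the two-point function satisfies G^{per}(o, z) ≤ G^{per}(o, z_i e_i), where G^{per}(x,y) = Z^{per}(x,y)/Z^{per}(∅). -/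
instance {d L : ℕ} (x y : TorusPt d L) : Decidable (torusAdj x y) := by
  unfold torusAdj; infer_instance

/-- The partition function `Z^{per}(∅)` of random lattice permutations:
the sum of `exp(-α e(π))` over all permutations `π` of the vertex set such that every
vertex is either fixed or mapped to a nearest neighbour, where `e(π)` is the number of
non-fixed points of `π`. -/
noncomputable def Zperm0 (d L : ℕ) [NeZero L] (α : ℝ) : ℝ :=
  ∑ π : Equiv.Perm (TorusPt d L),
    if ∀ z : TorusPt d L, π z = z ∨ torusAdj z (π z) then
      Real.exp (-α * ((Finset.univ.filter fun z : TorusPt d L => π z ≠ z).card : ℝ))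
    else 0

/-- The partition function `Z^{per}(x,y)` of random lattice permutations with a walk
from `x` to `y`: the sum of `exp(-α e(π))` over all bijections
`π : V ∖ {y} → V ∖ {x}` such that every vertex in the domain is either fixed or mapped
to a nearest neighbour, where `e(π)` is the number of non-fixed points of `π`. -/
noncomputable def Zperm2 (d L : ℕ) [NeZero L] (α : ℝ) (x y : TorusPt d L) : ℝ :=
  ∑ π : {z : TorusPt d L // z ≠ y} → {z : TorusPt d L // z ≠ x},
    if Function.Bijective π ∧
        ∀ z : {z : TorusPt d L // z ≠ y},
          (π z : TorusPt d L) = (z : TorusPt d L) ∨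
            torusAdj (z : TorusPt d L) (π z : TorusPt d L) then
      Real.exp (-α *
        ((Finset.univ.filter
          fun z : {z : TorusPt d L // z ≠ y} =>
            (π z : TorusPt d L) ≠ (z : TorusPt d L)).card : ℝ))
    else 0

/-!
Reflection positivity. Write `z_i = 2m + 1` and let `θ` reflect the `i`-th coordinate through
the bond `{m, m + 1}`; it swaps the slab `B = {m + 1 ≤ x_i ≤ m + L/2}` (mod `L`), which contains
`z` but not `o`, with its complement, and every edge leaving `B` joins a site to its mirror image.
A permutation `π` with a walk from `o` to `z` is determined by two configurations on the
complement of `B`: its own restriction `f`, and the restriction `h` of `θ π⁻¹ θ`, i.e. the part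
of `π` inside `B` mirrored and reversed. Conversely `f` and `h` glue to such a `π` exactly when
they have the same boundary data (the sites sent into `B`, and the sites entered from `B`), and
`e(π) + 1 = e(f) + e(h)`. Hence `Z(o, z) = e^α ∑_k F_o(k) F_{θz}(k)`, where `F_u(k)` is the total
weight of the configurations ending at `u` with boundary data `k`, so by Cauchy–Schwarz
`Z(o, z)² ≤ Z(o, θo) Z(θz, z)`. Both factors equal `Z(o, z_i e_i)`: `θo = z_i e_i`, and
`(θz, z)` is the translate of `(o, z_i e_i)` by `θz`.
-/

open Finset Equiv

namespace LatticePerm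

theorem sum_sum_ite_eq_sum_mul_sum {ι κ R : Type*} [Fintype κ] [DecidableEq κ] [CommSemiring R]
    (s t : Finset ι) (k l : ι → κ) (a b : ι → R) :
    ∑ x ∈ s, ∑ y ∈ t, (if k x = l y then a x * b y else 0) =
      ∑ c, (∑ x ∈ s with k x = c, a x) * ∑ y ∈ t with l y = c, b y := by
  have hfib : ∀ x y, (if k x = l y then a x * b y else 0) =
      ∑ c, (if k x = c then a x else 0) * (if l y = c then b y else 0) := by
    simp [ite_mul, eq_comm]
  simp_rw [hfib, sum_filter, sum_mul_sum]
  symm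
  rw [sum_comm]
  exact sum_congr rfl fun x _ => sum_comm

theorem sq_sum_sum_ite_le {ι κ R : Type*} [Fintype κ] [DecidableEq κ] [CommSemiring R]
    [LinearOrder R] [IsStrictOrderedRing R] [ExistsAddOfLE R]
    (s t : Finset ι) (k l : ι → κ) (a b : ι → R) :
    (∑ x ∈ s, ∑ y ∈ t, if k x = l y then a x * b y else 0) ^ 2 ≤
      (∑ x ∈ s, ∑ y ∈ s, if k x = k y then a x * a y else 0) *
        ∑ x ∈ t, ∑ y ∈ t, if l x = l y then b x * b y else 0 := by
  simp only [sum_sum_ite_eq_sum_mul_sum, ← sq]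
  exact sum_mul_sq_le_sq_mul_sq _ _ _

section Reflection

variable {V : Type*}

/-- `π` encodes a bijection `V ∖ {y} → V ∖ {x}` making `E`-steps, extended by `y ↦ x`. -/
def IsLinkPerm (E : V → V → Prop) (x y : V) (π : Perm V) : Prop :=
  π y = x ∧ ∀ w, w ≠ y → π w = w ∨ E w (π w)

structure IsReflection (E : V → V → Prop) (θ : Perm V) (B : Finset V) : Prop where
  symm : ∀ x y, E x y → E y x
  involutive : ∀ x, θ (θ x) = x
  map_adj : ∀ x y, E x y → E (θ x) (θ y)
  apply_mem_iff : ∀ x, θ x ∈ B ↔ x ∉ B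
  eq_apply_of_adj : ∀ x y, E x y → x ∉ B → y ∈ B → y = θ x

/-- Models the restriction to the complement of `B` of a link permutation from `u` to a site of
`B`; `entry_adj` records that the other sites not reached from outside `B` are entered across the
mirror. -/
structure IsHalf (E : V → V → Prop) (θ : Perm V) (B : Finset V) (u : V) (f : V → V) :
    Prop where
  apply_of_mem : ∀ b ∈ B, f b = b
  injOn : ∀ a ∉ B, ∀ a' ∉ B, f a = f a' → a = a'
  adj : ∀ a ∉ B, f a = a ∨ E a (f a)
  apply_ne : ∀ a ∉ B, f a ≠ u
  entry_adj : ∀ p ∉ B, p ≠ u → (∀ a ∉ B, f a ≠ p) → E p (θ p)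

variable {E : V → V → Prop} {θ : Perm V} {B : Finset V}

namespace IsReflection

theorem inv_eq (hR : IsReflection E θ B) : θ⁻¹ = θ :=
  DivisionMonoid.inv_eq_of_mul θ θ (Perm.ext hR.involutive)

theorem apply_not_mem_iff (hR : IsReflection E θ B) (x : V) : θ x ∉ B ↔ x ∈ B := by
  rw [hR.apply_mem_iff, not_not]

theorem eq_apply_of_adj_of_iff (hR : IsReflection E θ B) {x y : V} (hE : E x y)
    (hxy : x ∈ B ↔ y ∉ B) : y = θ x := by
  by_cases hx : x ∈ B
  · rw [hR.eq_apply_of_adj y x (hR.symm x y hE) (hxy.mp hx) hx, hR.involutive]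
  · exact hR.eq_apply_of_adj x y hE hx (not_not.mp (mt hxy.mpr hx))

end IsReflection

theorem IsHalf.apply_eq_of_mem {u : V} {f : V → V} (hR : IsReflection E θ B)
    (hf : IsHalf E θ B u f) {a : V} (ha : a ∉ B) (hfa : f a ∈ B) : f a = θ a :=
  hR.eq_apply_of_adj _ _ ((hf.adj a ha).resolve_left fun h => ha (h ▸ hfa)) ha hfa

namespace IsLinkPerm

variable {x y : V} {π : Perm V}

theorem apply_eq_iff (hR : IsReflection E θ B) (hπ : IsLinkPerm E x y π) {w : V}
    (hw : w ≠ y) : π w = θ w ↔ (w ∈ B ↔ π w ∉ B) := by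
  refine ⟨fun h => by rw [h, hR.apply_mem_iff, not_not], fun hside => ?_⟩
  refine hR.eq_apply_of_adj_of_iff ((hπ.2 w hw).resolve_left fun h => ?_) hside
  rw [h] at hside; tauto

theorem reflect (hR : IsReflection E θ B) (hπ : IsLinkPerm E x y π) :
    IsLinkPerm E (θ y) (θ x) (θ * π⁻¹ * θ) := by
  refine ⟨by simp [hR.involutive, Equiv.symm_apply_eq, hπ.1], fun w hw => ?_⟩
  obtain ⟨t, ht⟩ := π.surjective (θ w)
  have hw' : w = θ (π t) := by rw [ht, hR.involutive]
  have hty : t ≠ y := by rintro rfl; exact hw (by rw [hw', hπ.1])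
  subst hw'
  simp only [Perm.coe_mul, Perm.coe_inv, Function.comp_apply, hR.involutive, symm_apply_apply,
    EmbeddingLike.apply_eq_iff_eq]
  rcases hπ.2 t hty with hfix | hadj
  · left; rw [hfix]
  · exact Or.inr (hR.symm _ _ (hR.map_adj _ _ hadj))

theorem conj_iff {τ : Perm V} (hτ : ∀ a b, E (τ a) (τ b) ↔ E a b) :
    IsLinkPerm E (τ x) (τ y) (τ * π * τ⁻¹) ↔ IsLinkPerm E x y π := by
  have hτ' : ∀ w, τ⁻¹ (τ w) = w := fun w => by simp
  simp only [IsLinkPerm, Perm.mul_apply]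
  constructor
  · rintro ⟨h₁, h₂⟩
    refine ⟨by simpa [hτ'] using h₁, fun w hw => ?_⟩
    simpa [hτ', hτ] using h₂ (τ w) (τ.injective.ne hw)
  · rintro ⟨h₁, h₂⟩
    refine ⟨by simp [h₁], fun w hw => ?_⟩
    obtain ⟨w, rfl⟩ := τ.surjective w
    simpa [hτ', hτ] using h₂ w (fun h => hw (h ▸ rfl))

end IsLinkPerm

end Reflection

section Halves

variable {V : Type*} [DecidableEq V] {E : V → V → Prop} {θ : Perm V} {B : Finset V}

def halfMap (B : Finset V) (g : V → V) (x : V) : V := if x ∈ B then x else g x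

@[simp] theorem halfMap_of_mem {g : V → V} {x : V} (hx : x ∈ B) : halfMap B g x = x := if_pos hx

@[simp] theorem halfMap_of_not_mem {g : V → V} {x : V} (hx : x ∉ B) : halfMap B g x = g x :=
  if_neg hx

namespace IsLinkPerm

variable {x y : V} {π : Perm V}

theorem isHalf (hR : IsReflection E θ B) (hπ : IsLinkPerm E x y π) (hy : y ∈ B) :
    IsHalf E θ B x (halfMap B π) := by
  have hay : ∀ a ∉ B, a ≠ y := fun a ha h => ha (h ▸ hy)
  refine ⟨fun b hb => halfMap_of_mem hb, fun a ha a' ha' h => ?_, fun a ha => ?_,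
    fun a ha h => ?_, fun p hp hpx hnot => ?_⟩
  · simpa [ha, ha'] using h
  · simpa [ha] using hπ.2 a (hay a ha)
  · rw [halfMap_of_not_mem ha, ← hπ.1] at h
    exact hay a ha (π.injective h)
  · obtain ⟨w, rfl⟩ := π.surjective p
    have hwB : w ∈ B := by
      by_contra hwB; exact hnot w hwB (halfMap_of_not_mem hwB)
    have hwy : w ≠ y := by rintro rfl; exact hpx hπ.1
    have hθ := (hπ.apply_eq_iff hR hwy).mpr (by simp [hwB, hp])
    have hE := hR.symm _ _ ((hπ.2 w hwy).resolve_left fun h => hp (by rwa [h]))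
    rw [hθ] at hE ⊢
    rwa [hR.involutive]

theorem eq_of_halfMap_eq (hR : IsReflection E θ B) {π' : Perm V} (hπ : IsLinkPerm E x y π)
    (hπ' : IsLinkPerm E x y π') (h₁ : halfMap B π = halfMap B π')
    (h₂ : halfMap B (θ * π⁻¹ * θ) = halfMap B (θ * π'⁻¹ * θ)) : π = π' := by
  have hA : ∀ a ∉ B, π a = π' a := fun a ha => by
    simpa [ha] using congrFun h₁ a
  have hB : ∀ b ∈ B, π⁻¹ b = π'⁻¹ b := fun b hb => by
    simpa [hb, hR.apply_not_mem_iff, hR.involutive] using congrFun h₂ (θ b)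
  have hinv : ∀ {ρ ρ' : Perm V}, (∀ b ∈ B, ρ⁻¹ b = ρ'⁻¹ b) → ∀ w, ρ w ∈ B → ρ w = ρ' w :=
    fun {ρ ρ'} hρ w h => by
      have := hρ _ h
      rwa [show ρ⁻¹ (ρ w) = w from Perm.inv_eq_iff_eq.mpr rfl, eq_comm, Perm.inv_eq_iff_eq]
        at this
  ext w
  by_cases hw : w ∈ B
  · by_cases h : π w ∈ B
    · exact hinv hB w h
    by_cases h' : π' w ∈ B
    · exact (hinv (fun b hb => (hB b hb).symm) w h').symm
    by_cases hwy : w = y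
    · rw [hwy, hπ.1, hπ'.1]
    rw [(hπ.apply_eq_iff hR hwy).mpr (by tauto), (hπ'.apply_eq_iff hR hwy).mpr (by tauto)]
  · exact hA w hw

end IsLinkPerm

section Fintype

variable [Fintype V]

def exitSet (B : Finset V) (f : V → V) : Finset V := {a | a ∉ B ∧ f a ∈ B}

def entrySet (B : Finset V) (u : V) (f : V → V) : Finset V :=
  {p | p ∉ B ∧ p ≠ u ∧ ∀ a ∉ B, f a ≠ p}

@[simp] theorem mem_exitSet {f : V → V} {a : V} : a ∈ exitSet B f ↔ a ∉ B ∧ f a ∈ B := by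
  simp [exitSet]

@[simp] theorem mem_entrySet {u : V} {f : V → V} {p : V} :
    p ∈ entrySet B u f ↔ p ∉ B ∧ p ≠ u ∧ ∀ a ∉ B, f a ≠ p := by
  simp [entrySet]

def boundary (B : Finset V) (u : V) (f : V → V) : Finset V × Finset V :=
  (exitSet B f, entrySet B u f)

noncomputable def halfWeight (α : ℝ) (f : V → V) : ℝ := Real.exp (-α * #{x | f x ≠ x})

theorem card_halfMap_ne (g : Perm V) : #{x | halfMap B g x ≠ x} = #{x ∈ g.support | x ∉ B} := by
  congr 1; ext x; by_cases hx : x ∈ B <;> simp [hx]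

namespace IsLinkPerm

variable {x y : V} {π : Perm V}

theorem mem_exitSet_iff (hR : IsReflection E θ B) (hπ : IsLinkPerm E x y π) (hy : y ∈ B)
    {a : V} : a ∈ exitSet B (halfMap B π) ↔ a ∉ B ∧ π a = θ a := by
  rw [mem_exitSet, and_congr_right_iff]
  intro ha
  rw [halfMap_of_not_mem ha, hπ.apply_eq_iff hR (by rintro rfl; exact ha hy)]
  tauto

theorem mem_entrySet_iff (hR : IsReflection E θ B) (hπ : IsLinkPerm E x y π) (hy : y ∈ B)
    {p : V} : p ∈ entrySet B x (halfMap B π) ↔ p ∉ B ∧ θ p ≠ y ∧ π (θ p) = p := by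
  rw [mem_entrySet, and_congr_right_iff]
  intro hp
  constructor
  · rintro ⟨hpx, hnot⟩
    obtain ⟨w, rfl⟩ := π.surjective p
    have hwB : w ∈ B := by
      by_contra hwB; exact hnot w hwB (halfMap_of_not_mem hwB)
    have hwy : w ≠ y := by rintro rfl; exact hpx hπ.1
    have hcross : π w = θ w := (hπ.apply_eq_iff hR hwy).mpr (by simp [hwB, hp])
    rw [hcross, hR.involutive]
    exact ⟨hwy, hcross⟩
  · rintro ⟨hpy, hπp⟩
    refine ⟨fun hpx => hpy (π.injective (by rw [hπp, hπ.1, hpx])), fun a ha hap => ?_⟩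
    rw [halfMap_of_not_mem ha, ← hπp] at hap
    rw [π.injective hap] at ha
    exact ha ((hR.apply_mem_iff p).mpr hp)

theorem boundary_reflect (hR : IsReflection E θ B) (hπ : IsLinkPerm E x y π) (hx : x ∉ B)
    (hy : y ∈ B) : boundary B (θ y) (halfMap B (θ * π⁻¹ * θ)) = boundary B x (halfMap B π) := by
  have hσ := hπ.reflect hR
  have hθx : θ x ∈ B := (hR.apply_mem_iff x).mpr hx
  have hinv : ∀ a b, θ (π⁻¹ a) = b ↔ π (θ b) = a := fun a b => by
    rw [← hR.involutive b, θ.injective.eq_iff, Perm.inv_eq_iff_eq, hR.involutive, eq_comm]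
  ext a
  · rw [boundary, boundary, hσ.mem_exitSet_iff hR hθx, hπ.mem_exitSet_iff hR hy]
    simp only [Perm.mul_apply, hinv, hR.involutive]
  · rw [boundary, boundary, hσ.mem_entrySet_iff hR hθx, hπ.mem_entrySet_iff hR hy]
    simp only [Perm.mul_apply, hinv, hR.involutive, θ.injective.ne_iff]
    refine and_congr_right fun _ => ⟨fun ⟨hax, h⟩ => ⟨fun hay => hax ?_, h⟩,
      fun ⟨hay, h⟩ => ⟨fun hax => hay (π.injective ?_), h⟩⟩
    · rw [← h, hay, hπ.1]
    · rw [h, hax, hπ.1]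

theorem exp_weight_eq (hR : IsReflection E θ B) (hπ : IsLinkPerm E x y π) (hx : x ∉ B)
    (hy : y ∈ B) (α : ℝ) :
    Real.exp (-α * #(π.support.erase y)) =
      Real.exp α * (halfWeight α (halfMap B π) * halfWeight α (halfMap B (θ * π⁻¹ * θ))) := by
  have hsupp : (θ * π⁻¹ * θ).support = π.support.map θ.toEmbedding := by
    have hconj : θ * π⁻¹ * θ = θ * π⁻¹ * θ⁻¹ := by rw [hR.inv_eq]
    rw [hconj, Perm.support_conj, Perm.support_inv]
  have hB : #{x ∈ (θ * π⁻¹ * θ).support | x ∉ B} = #{x ∈ π.support | x ∈ B} := by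
    rw [hsupp, filter_map, card_map]
    simp [hR.apply_not_mem_iff]
  have hcard : #(π.support.erase y) + 1 =
      #{x ∈ π.support | x ∉ B} + #{x ∈ (θ * π⁻¹ * θ).support | x ∉ B} := by
    have hyx : y ∈ π.support := by
      rw [Perm.mem_support, hπ.1]; rintro rfl; exact hx hy
    rw [card_erase_add_one hyx, hB, add_comm, card_filter_add_card_filter_not]
  have hcard' : (#(π.support.erase y) : ℝ) + 1 =
      #{x ∈ π.support | x ∉ B} + #{x ∈ (θ * π⁻¹ * θ).support | x ∉ B} := by exact_mod_cast hcard
  rw [halfWeight, halfWeight, card_halfMap_ne, card_halfMap_ne, ← Real.exp_add, ← Real.exp_add]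
  congr 1
  linear_combination (-α) * hcard'

end IsLinkPerm

/-- Inverse of `π ↦ (halfMap B π, halfMap B (θ * π⁻¹ * θ))`: on `B ∖ {v}` it undoes the mirrored,
reversed half `h`. -/
noncomputable def glue (θ : Perm V) (B : Finset V) (u v : V) (f h : V → V) (x : V) : V :=
  if x ∈ B then
    if x = v then u else if hx : ∃ a ∉ B, h a = θ x then θ hx.choose else θ x
  else f x

section Glue

variable {u v x : V} {f h : V → V}

theorem glue_of_not_mem (hx : x ∉ B) : glue θ B u v f h x = f x := if_neg hx

theorem glue_self (hv : v ∈ B) : glue θ B u v f h v = u := by simp [glue, hv]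

theorem glue_apply_apply_of_not_mem (hR : IsReflection E θ B) (hh : IsHalf E θ B (θ v) h)
    {a : V} (ha : a ∉ B) (hha : h a ∉ B) : glue θ B u v f h (θ (h a)) = θ a := by
  have hex : ∃ a' ∉ B, h a' = θ (θ (h a)) := ⟨a, ha, by rw [hR.involutive]⟩
  have hne : θ (h a) ≠ v := fun hv => hh.apply_ne a ha (by rw [← hv, hR.involutive])
  rw [glue, if_pos ((hR.apply_mem_iff _).mpr hha), if_neg hne, dif_pos hex]
  obtain ⟨hc, hca⟩ := hex.choose_spec
  rw [hh.injOn _ hc a ha (hca.trans (hR.involutive _))]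

theorem glue_apply_of_mem_entrySet (hR : IsReflection E θ B) {p : V}
    (hp : p ∈ entrySet B (θ v) h) : glue θ B u v f h (θ p) = p := by
  obtain ⟨hpB, hpv, hnot⟩ := mem_entrySet.mp hp
  have hne : θ p ≠ v := fun hv => hpv (by rw [← hv, hR.involutive])
  rw [glue, if_pos ((hR.apply_mem_iff _).mpr hpB), if_neg hne, dif_neg, hR.involutive]
  rintro ⟨a, ha, hap⟩
  exact hnot a ha (by rwa [hR.involutive] at hap)

theorem mem_entrySet_or_exists_eq (hR : IsReflection E θ B) {b : V} (hb : b ∈ B)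
    (hbv : b ≠ v) : θ b ∈ entrySet B (θ v) h ∨ ∃ a ∉ B, h a ∉ B ∧ θ (h a) = b := by
  by_cases hex : ∃ a ∉ B, h a = θ b
  · obtain ⟨a, ha, hab⟩ := hex
    exact Or.inr ⟨a, ha, by rw [hab]; exact (hR.apply_not_mem_iff b).mpr hb,
      by rw [hab, hR.involutive]⟩
  · push Not at hex
    exact Or.inl (mem_entrySet.mpr ⟨(hR.apply_not_mem_iff b).mpr hb, θ.injective.ne hbv, hex⟩)

theorem glue_surjective (hR : IsReflection E θ B) (hv : v ∈ B) (hf : IsHalf E θ B u f)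
    (hh : IsHalf E θ B (θ v) h) (hfh : boundary B u f = boundary B (θ v) h) :
    Function.Surjective (glue θ B u v f h) := by
  have hexit : exitSet B f = exitSet B h := congrArg Prod.fst hfh
  have hentry : entrySet B u f = entrySet B (θ v) h := congrArg Prod.snd hfh
  intro y
  by_cases hy : y ∈ B
  · have ha : θ y ∉ B := (hR.apply_not_mem_iff y).mpr hy
    by_cases hfa : f (θ y) ∈ B
    · refine ⟨θ y, ?_⟩
      rw [glue_of_not_mem ha, hf.apply_eq_of_mem hR ha hfa, hR.involutive]
    · have hha : h (θ y) ∉ B := fun hha => hfa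
        (mem_exitSet.mp (hexit ▸ mem_exitSet.mpr ⟨ha, hha⟩ : θ y ∈ exitSet B f)).2
      exact ⟨_, by rw [glue_apply_apply_of_not_mem hR hh ha hha, hR.involutive]⟩
  · by_cases hyu : y = u
    · exact ⟨v, by rw [glue_self hv, hyu]⟩
    by_cases hyP : y ∈ entrySet B u f
    · exact ⟨_, glue_apply_of_mem_entrySet hR (hentry ▸ hyP)⟩
    simp only [mem_entrySet, not_and, not_forall, not_not] at hyP
    obtain ⟨a, ha, hay⟩ := hyP hy hyu
    exact ⟨a, by rw [glue_of_not_mem ha, hay]⟩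

theorem glue_adj (hR : IsReflection E θ B) (hf : IsHalf E θ B u f) (hh : IsHalf E θ B (θ v) h)
    {w : V} (hwv : w ≠ v) : glue θ B u v f h w = w ∨ E w (glue θ B u v f h w) := by
  by_cases hw : w ∈ B
  · rcases mem_entrySet_or_exists_eq hR hw hwv (h := h) with hp | ⟨a, ha, hha, rfl⟩
    · have hglue := glue_apply_of_mem_entrySet hR hp (u := u) (f := f)
      rw [hR.involutive] at hglue
      obtain ⟨hpB, hpv, hnot⟩ := mem_entrySet.mp hp
      have hE := hh.entry_adj _ hpB hpv hnot
      rw [hR.involutive] at hE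
      exact Or.inr (hglue ▸ hR.symm _ _ hE)
    · rw [glue_apply_apply_of_not_mem hR hh ha hha]
      rcases hh.adj a ha with hfix | hE
      · exact Or.inl (by rw [hfix])
      · exact Or.inr (hR.symm _ _ (hR.map_adj _ _ hE))
  · rw [glue_of_not_mem hw]
    exact hf.adj w hw

theorem halfMap_glue (hf : IsHalf E θ B u f) : halfMap B (glue θ B u v f h) = f := by
  funext x
  by_cases hx : x ∈ B
  · rw [halfMap_of_mem hx, hf.apply_of_mem x hx]
  · rw [halfMap_of_not_mem hx, glue_of_not_mem hx]

theorem halfMap_reflect_glue (hR : IsReflection E θ B) (hf : IsHalf E θ B u f)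
    (hh : IsHalf E θ B (θ v) h) (hexit : exitSet B f = exitSet B h) {π : Perm V}
    (hπ : ⇑π = glue θ B u v f h) : halfMap B (θ * π⁻¹ * θ) = h := by
  funext a
  by_cases ha : a ∈ B
  · rw [halfMap_of_mem ha, hh.apply_of_mem a ha]
  rw [halfMap_of_not_mem ha, Perm.mul_apply, Perm.mul_apply, ← hR.involutive (h a),
    θ.injective.eq_iff, Perm.inv_eq_iff_eq, hπ]
  by_cases hha : h a ∈ B
  · have hfa : f a ∈ B := (mem_exitSet.mp (hexit ▸ mem_exitSet.mpr ⟨ha, hha⟩ : a ∈ exitSet B f)).2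
    rw [hh.apply_eq_of_mem hR ha hha, hR.involutive, glue_of_not_mem ha,
      hf.apply_eq_of_mem hR ha hfa]
  · rw [glue_apply_apply_of_not_mem hR hh ha hha]

end Glue

open Classical in
noncomputable def linkSum (α : ℝ) (E : V → V → Prop) (x y : V) : ℝ :=
  ∑ π : Perm V with IsLinkPerm E x y π, Real.exp (-α * #(π.support.erase y))

open Classical in
noncomputable def halves (E : V → V → Prop) (θ : Perm V) (B : Finset V) (u : V) :
    Finset (V → V) :=
  {f | IsHalf E θ B u f}

theorem linkSum_nonneg (α : ℝ) (E : V → V → Prop) (x y : V) : 0 ≤ linkSum α E x y :=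
  sum_nonneg fun _ _ => (Real.exp_pos _).le

theorem linkSum_eq_sum_halves (hR : IsReflection E θ B) {u v : V} (hu : u ∉ B) (hv : v ∈ B)
    (α : ℝ) :
    linkSum α E u v = Real.exp α * ∑ f ∈ halves E θ B u, ∑ g ∈ halves E θ B (θ v),
      if boundary B u f = boundary B (θ v) g then halfWeight α f * halfWeight α g else 0 := by
  classical
  have hθu : θ u ∈ B := (hR.apply_mem_iff u).mpr hu
  rw [← sum_product (f := fun fg : (V → V) × (V → V) =>
      if boundary B u fg.1 = boundary B (θ v) fg.2 then halfWeight α fg.1 * halfWeight α fg.2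
      else 0), ← sum_filter, mul_sum, linkSum]
  refine sum_bij (fun π _ => (halfMap B π, halfMap B (θ * π⁻¹ * θ))) ?_ ?_ ?_ ?_
  · intro π hπ
    simp only [mem_filter, mem_univ, true_and] at hπ
    simp only [mem_filter, mem_product, halves, mem_univ, true_and]
    exact ⟨⟨hπ.isHalf hR hv, (hπ.reflect hR).isHalf hR hθu⟩,
      (hπ.boundary_reflect hR hu hv).symm⟩
  · intro π hπ π' hπ' heq
    simp only [mem_filter, mem_univ, true_and] at hπ hπ'
    obtain ⟨h₁, h₂⟩ := Prod.mk.inj heq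
    exact hπ.eq_of_halfMap_eq hR hπ' h₁ h₂
  · rintro ⟨f, g⟩ hfg
    simp only [mem_filter, mem_product, halves, mem_univ, true_and] at hfg
    obtain ⟨⟨hf, hg⟩, hfg⟩ := hfg
    let π := Equiv.ofBijective _ (glue_surjective hR hv hf hg hfg).bijective_of_finite
    have hπ : IsLinkPerm E u v π := ⟨glue_self hv, fun w hw => glue_adj hR hf hg hw⟩
    refine ⟨π, by simpa using hπ, ?_⟩
    simp only [Prod.mk.injEq]
    exact ⟨halfMap_glue hf, halfMap_reflect_glue hR hf hg (congrArg Prod.fst hfg) rfl⟩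
  · intro π hπ
    simp only [mem_filter, mem_univ, true_and] at hπ
    exact hπ.exp_weight_eq hR hu hv α

theorem linkSum_sq_le (hR : IsReflection E θ B) {u v : V} (hu : u ∉ B) (hv : v ∈ B) (α : ℝ) :
    linkSum α E u v ^ 2 ≤ linkSum α E u (θ u) * linkSum α E (θ v) v := by
  rw [linkSum_eq_sum_halves hR hu hv, linkSum_eq_sum_halves hR hu ((hR.apply_mem_iff u).mpr hu),
    linkSum_eq_sum_halves hR ((hR.apply_not_mem_iff v).mpr hv) hv, hR.involutive, mul_pow]
  calc _ ≤ Real.exp α ^ 2 * ((∑ f ∈ halves E θ B u, ∑ g ∈ halves E θ B u,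
          if boundary B u f = boundary B u g then halfWeight α f * halfWeight α g else 0) *
        ∑ f ∈ halves E θ B (θ v), ∑ g ∈ halves E θ B (θ v),
          if boundary B (θ v) f = boundary B (θ v) g then halfWeight α f * halfWeight α g
          else 0) := by
        gcongr
        exact sq_sum_sum_ite_le _ _ _ _ _ _
    _ = _ := by ring

theorem linkSum_conj {τ : Perm V} (hτ : ∀ a b, E (τ a) (τ b) ↔ E a b) (α : ℝ) (x y : V) :
    linkSum α E (τ x) (τ y) = linkSum α E x y := by
  classical
  rw [linkSum, linkSum, sum_filter, sum_filter]
  refine (Fintype.sum_equiv (MulAut.conj τ).toEquiv _ _ fun π => ?_).symm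
  simp only [MulEquiv.toEquiv_eq_coe, MulEquiv.coe_toEquiv, MulAut.conj_apply,
    IsLinkPerm.conj_iff hτ, Perm.support_conj]
  rw [show τ y = τ.toEmbedding y from rfl, ← map_erase, card_map]

theorem exists_perm_extend {x y : V} {g : {z // z ≠ y} → {z // z ≠ x}}
    (hg : Function.Injective g) : ∃ π : Perm V, π y = x ∧ ∀ w : {z // z ≠ y}, π w = g w := by
  set f : V → V := fun w => if hw : w = y then x else g ⟨w, hw⟩ with hf
  have hfinj : Function.Injective f := by
    intro w w' h
    by_cases hw : w = y <;> by_cases hw' : w' = y <;>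
      simp only [hf, hw, hw', dif_pos, dif_neg, not_false_eq_true] at h
    · rw [hw, hw']
    · exact absurd h.symm (g ⟨w', hw'⟩).2
    · exact absurd h (g ⟨w, hw⟩).2
    · exact congrArg Subtype.val (hg (Subtype.ext h))
  exact ⟨Equiv.ofBijective f hfinj.bijective_of_finite, by simp [hf], fun w => by simp [hf, w.2]⟩

theorem sum_bijective_eq_linkSum [DecidableRel E] (α : ℝ) (x y : V) :
    ∑ g : {z // z ≠ y} → {z // z ≠ x},
      (if Function.Bijective g ∧ ∀ z, (g z : V) = z ∨ E z (g z) then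
        Real.exp (-α * #{z | (g z : V) ≠ z}) else 0) = linkSum α E x y := by
  classical
  rw [← sum_filter, linkSum]
  symm
  have hne : ∀ π : Perm V, IsLinkPerm E x y π → ∀ w : {z // z ≠ y}, π w ≠ x :=
    fun π hπ w h => w.2 (π.injective (h.trans hπ.1.symm))
  refine sum_bij (fun π hπ w => ⟨π w, hne π (mem_filter.mp hπ).2 w⟩) ?_ ?_ ?_ ?_
  · intro π hπ
    simp only [mem_filter, mem_univ, true_and] at hπ ⊢
    refine ⟨⟨fun w w' h => Subtype.ext (π.injective (congrArg Subtype.val h)), fun t => ?_⟩,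
      fun w => hπ.2 w w.2⟩
    refine ⟨⟨π⁻¹ t, fun h => t.2 ?_⟩, Subtype.ext (by simp)⟩
    simpa [hπ.1] using congrArg π h
  · intro π hπ π' hπ' h
    simp only [mem_filter, mem_univ, true_and] at hπ hπ'
    ext w
    by_cases hw : w = y
    · rw [hw, hπ.1, hπ'.1]
    · exact congrArg Subtype.val (congrFun h ⟨w, hw⟩)
  · intro g hg
    simp only [mem_filter, mem_univ, true_and] at hg
    obtain ⟨π, hπy, hπg⟩ := exists_perm_extend hg.1.1
    have hπ : IsLinkPerm E x y π := ⟨hπy, fun w hw => by simpa [hπg ⟨w, hw⟩] using hg.2 ⟨w, hw⟩⟩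
    exact ⟨π, by simpa using hπ, funext fun w => Subtype.ext (hπg w)⟩
  · intro π _
    congr 3
    refine (card_bij (fun z _ => z.1) (fun z hz => ?_) (fun _ _ _ _ h => Subtype.ext h) ?_).symm
    · simp only [mem_filter, mem_univ, true_and] at hz
      exact mem_erase.mpr ⟨z.2, Perm.mem_support.mpr hz⟩
    · intro w hw
      obtain ⟨hwy, hw⟩ := mem_erase.mp hw
      exact ⟨⟨w, hwy⟩, by simpa using Perm.mem_support.mp hw, rfl⟩

end Fintype

end Halves

section Torus

variable {d L : ℕ}

theorem torusAdj_iff {x y : TorusPt d L} :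
    torusAdj x y ↔ ∃ j e, (e = 1 ∨ e = -1) ∧ y = Function.update x j (x j + e) := by
  simp only [torusAdj, sub_eq_add_neg]
  constructor
  · rintro ⟨j, h | h⟩
    exacts [⟨j, 1, Or.inl rfl, h⟩, ⟨j, -1, Or.inr rfl, h⟩]
  · rintro ⟨j, e, he | he, rfl⟩ <;> subst he
    exacts [⟨j, Or.inl rfl⟩, ⟨j, Or.inr rfl⟩]

theorem torusAdj_symm {x y : TorusPt d L} (h : torusAdj x y) : torusAdj y x := by
  obtain ⟨j, e, he, rfl⟩ := torusAdj_iff.mp h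
  refine torusAdj_iff.mpr ⟨j, -e, by rcases he with rfl | rfl <;> simp, ?_⟩
  rw [Function.update_self, Function.update_idem, add_neg_cancel_right, Function.update_eq_self]

theorem torusAdj_affine {x y : TorusPt d L} (ε c : TorusPt d L) (hε : ∀ k, ε k = 1 ∨ ε k = -1)
    (h : torusAdj x y) : torusAdj (ε * x + c) (ε * y + c) := by
  obtain ⟨j, e, he, rfl⟩ := torusAdj_iff.mp h
  refine torusAdj_iff.mpr ⟨j, ε j * e, by rcases hε j with hj | hj <;> rcases he with rfl | rfl <;>
    simp [hj], ?_⟩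
  funext k
  by_cases hk : k = j
  · subst hk
    simp only [Pi.add_apply, Pi.mul_apply, Function.update_self]
    ring
  · simp [hk]

theorem torusAdj_add_right {x y : TorusPt d L} (c : TorusPt d L) (h : torusAdj x y) :
    torusAdj (x + c) (y + c) := by
  simpa using torusAdj_affine 1 c (fun _ => Or.inl rfl) h

theorem torusAdj_add_right_iff {x y : TorusPt d L} (c : TorusPt d L) :
    torusAdj (x + c) (y + c) ↔ torusAdj x y :=
  ⟨fun h => by simpa using torusAdj_add_right (-c) h, torusAdj_add_right c⟩

theorem val_neg_one_sub [NeZero L] (t : ZMod L) : (-1 - t).val = L - 1 - t.val := by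
  have ht := t.val_lt
  have hcast : ((L - 1 - t.val : ℕ) : ZMod L) = -1 - t := by
    rw [Nat.cast_sub (by omega), Nat.cast_sub (by omega), ZMod.natCast_self, ZMod.natCast_zmod_val,
      Nat.cast_one, zero_sub]
  rw [← hcast, ZMod.val_natCast, Nat.mod_eq_of_lt (by omega)]

theorem eq_neg_one_sub_of_cross [NeZero L] {K : ℕ} (hL : L = K + K) {t e : ZMod L}
    (he : e = 1 ∨ e = -1) (ht : K ≤ t.val) (hte : (t + e).val < K) : t + e = -1 - t := by
  have hlt := t.val_lt
  have hone : (1 : ZMod L).val = 1 := by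
    rw [ZMod.val_one_eq_one_mod, Nat.mod_eq_of_lt (by omega)]
  rcases he with rfl | rfl
  · have htop : t.val = L - 1 := by
      by_contra h
      rw [ZMod.val_add_of_lt (by omega), hone] at hte
      omega
    have : t = -1 := ZMod.val_injective L (by rw [htop, ← sub_zero (-1 : ZMod L),
      val_neg_one_sub, ZMod.val_zero, Nat.sub_zero])
    subst this; ring
  · rw [← sub_eq_add_neg] at hte ⊢
    rw [ZMod.val_sub (by omega), hone] at hte
    refine ZMod.val_injective L ?_
    rw [ZMod.val_sub (by omega), hone, val_neg_one_sub]
    omega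

def torusReflection (i : Fin d) (s : ZMod L) : Perm (TorusPt d L) :=
  Function.Involutive.toPerm (fun x => Function.update x i (s - x i)) fun x => by simp

theorem torusReflection_apply (i : Fin d) (s : ZMod L) (x : TorusPt d L) :
    torusReflection i s x = Function.update x i (s - x i) := rfl

theorem torusReflection_eq_affine (i : Fin d) (s : ZMod L) (x : TorusPt d L) :
    torusReflection i s x =
      Function.update (1 : TorusPt d L) i (-1) * x + Function.update (0 : TorusPt d L) i s := by
  funext k
  by_cases hk : k = i
  · subst hk
    simp only [torusReflection_apply, Function.update_self, Pi.add_apply, Pi.mul_apply, neg_mul,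
      one_mul]
    ring
  · simp [torusReflection_apply, hk]

def torusHalf [NeZero L] (i : Fin d) (c : ZMod L) (K : ℕ) : Finset (TorusPt d L) :=
  {x | (x i - c).val < K}

theorem isReflection_torus [NeZero L] {K : ℕ} (hL : L = K + K) (i : Fin d) (c : ZMod L) :
    IsReflection torusAdj (torusReflection i (2 * c - 1)) (torusHalf i c K) where
  symm _ _ := torusAdj_symm
  involutive x := by simp [torusReflection_apply]
  map_adj x y h := by
    simpa only [torusReflection_eq_affine] using torusAdj_affine _ _
      (fun k => by by_cases hk : k = i <;> simp [hk]) h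
  apply_mem_iff x := by
    have hlt := (x i - c).val_lt
    have hrefl : 2 * c - 1 - x i - c = -1 - (x i - c) := by ring
    simp only [torusHalf, mem_filter, mem_univ, true_and, torusReflection_apply,
      Function.update_self, hrefl, val_neg_one_sub]
    omega
  eq_apply_of_adj x y h hx hy := by
    obtain ⟨j, e, he, rfl⟩ := torusAdj_iff.mp h
    simp only [torusHalf, mem_filter, mem_univ, true_and, not_lt] at hx hy
    by_cases hj : j = i
    · subst hj
      rw [Function.update_self, show x j + e - c = x j - c + e by ring] at hy
      have hcross := eq_neg_one_sub_of_cross hL he hx hy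
      rw [torusReflection_apply]
      congr 1
      linear_combination hcross
    · rw [Function.update_of_ne (Ne.symm hj)] at hy
      omega

theorem Zperm2_eq_linkSum [NeZero L] (α : ℝ) (x y : TorusPt d L) :
    Zperm2 d L α x y = linkSum α torusAdj x y :=
  sum_bijective_eq_linkSum α x y

theorem Zperm0_nonneg [NeZero L] (α : ℝ) : 0 ≤ Zperm0 d L α :=
  sum_nonneg fun _ _ => by split_ifs <;> positivity

theorem linkSum_add_right [NeZero L] (α : ℝ) (c x y : TorusPt d L) :
    linkSum α torusAdj (x + c) (y + c) = linkSum α torusAdj x y :=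
  linkSum_conj (τ := Equiv.addRight c) (fun _ _ => torusAdj_add_right_iff c) α x y

theorem torusReflection_origin (i : Fin d) (s : ZMod L) :
    torusReflection i s (torusOrigin d L) = fun k => if k = i then s else 0 := by
  funext k
  by_cases hk : k = i
  · subst hk; simp [torusReflection_apply, torusOrigin]
  · simp [torusReflection_apply, torusOrigin, hk]

theorem axis_add_torusReflection (i : Fin d) (z : TorusPt d L) :
    (fun k => if k = i then z i else 0) + torusReflection i (z i) z = z := by
  funext k
  by_cases hk : k = i
  · subst hk; simp [torusReflection_apply]
  · simp [torusReflection_apply, hk]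

theorem linkSum_origin_le_axis [NeZero L] (hL : Even L) (α : ℝ) (z : TorusPt d L) (i : Fin d)
    (hodd : Odd (z i).val) :
    linkSum α torusAdj (torusOrigin d L) z ≤
      linkSum α torusAdj (torusOrigin d L) (fun k => if k = i then z i else 0) := by
  obtain ⟨m, hm⟩ := hodd
  obtain ⟨K, hK⟩ := hL
  have hmK : m < K := by have := (z i).val_lt; omega
  have hmval : (m : ZMod L).val = m := by rw [ZMod.val_natCast, Nat.mod_eq_of_lt (by omega)]
  set c : ZMod L := m + 1 with hc
  have hzi : z i = 2 * c - 1 := by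
    rw [← ZMod.natCast_zmod_val (z i), hm, hc]; push_cast; ring
  have hR : IsReflection torusAdj (torusReflection i (z i)) (torusHalf i c K) :=
    hzi ▸ isReflection_torus hK i c
  have hz : z ∈ torusHalf i c K := by
    simp only [torusHalf, mem_filter, mem_univ, true_and]
    rw [show z i - c = m by rw [hzi, hc]; ring, hmval]
    exact hmK
  have ho : torusOrigin d L ∉ torusHalf i c K := by
    have hoc : torusOrigin d L i - c = -1 - m := by
      simp only [torusOrigin, hc]
      ring
    simp only [torusHalf, mem_filter, mem_univ, true_and, not_lt, hoc, val_neg_one_sub, hmval]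
    omega
  have htrans := linkSum_add_right α (torusReflection i (z i) z) (torusOrigin d L)
    (fun k => if k = i then z i else 0)
  rw [axis_add_torusReflection, show torusOrigin d L + torusReflection i (z i) z =
    torusReflection i (z i) z from zero_add _] at htrans
  have hsq := linkSum_sq_le hR ho hz α
  rw [torusReflection_origin, htrans, ← sq] at hsq
  exact (pow_le_pow_iff_left₀ (linkSum_nonneg _ _ _ _) (linkSum_nonneg _ _ _ _) two_ne_zero).mp hsq

end Torus

end LatticePerm

theorem perm_two_point_le_axis_projection_general
    (d L : ℕ) [NeZero L] (hL : Even L) (α : ℝ)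
    (z : TorusPt d L) (i : Fin d) (hodd : Odd (z i).val) :
    Zperm2 d L α (torusOrigin d L) z / Zperm0 d L α ≤
      Zperm2 d L α (torusOrigin d L) (fun k : Fin d => if k = i then z i else 0) /
        Zperm0 d L α := by
  rw [LatticePerm.Zperm2_eq_linkSum, LatticePerm.Zperm2_eq_linkSum]
  exact div_le_div_of_nonneg_right (LatticePerm.linkSum_origin_le_axis hL α z i hodd)
    (LatticePerm.Zperm0_nonneg α)

/-- **Site-monotonicity for random lattice permutations (projection onto an axis).**
For every `z ∈ T_L` and direction `i` with `z_i` odd, the two-point function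
`G^{per}(x,y) = Z^{per}(x,y)/Z^{per}(∅)` satisfies
`G^{per}(o, z) ≤ G^{per}(o, z_i e_i)`. -/
theorem perm_two_point_le_axis_projection
    (d L : ℕ) [NeZero L] (hd : 2 ≤ d) (hL : Even L) (α : ℝ)
    (z : TorusPt d L) (i : Fin d) (hodd : Odd (z i).val) :
    Zperm2 d L α (torusOrigin d L) z / Zperm0 d L α ≤
      Zperm2 d L α (torusOrigin d L) (fun k : Fin d => if k = i then z i else 0) /
        Zperm0 d L α :=
  perm_two_point_le_axis_projection_general d L hL α z i hodd
end
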